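/- arXiv:2205.08238 — 7 statements merged into one kernel-verified Lean document; each statement's English description precedes it below -/
import Mathlib

section
/- Let (X,d) be an unbounded proper metric space in which d(x,y) ≥ 1 for all x ≠ y, equipped with its metric coarse proximity structure. If asdim(X) = 0, then Δ_c(X) = 0; that is, X admits a fine directed system of coarsely canonical covers each of order at most 1. -/
universe u v w

/-- A coarse proximity space: a set with a bornology and a coarse proximity relation. -/
structure CoarseProximity (X : Type u) where
  bounded : Set (Set X)
  close : Set X → Set X → Prop
  empty_mem : ∅ ∈ bounded
  singleton_mem : ∀ x : X, {x} ∈ bounded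
  subset_mem : ∀ A ∈ bounded, ∀ C : Set X, C ⊆ A → C ∈ bounded
  union_mem : ∀ A ∈ bounded, ∀ C ∈ bounded, A ∪ C ∈ bounded
  symm : ∀ A C : Set X, close A C → close C A
  unbounded_left : ∀ A C : Set X, close A C → A ∉ bounded
  unbounded_right : ∀ A C : Set X, close A C → C ∉ bounded
  inter_close : ∀ A C : Set X, A ∩ C ∉ bounded → close A C
  union_close_iff : ∀ A C D : Set X, (close (A ∪ C) D ↔ close A D ∨ close C D)
  strong : ∀ A C : Set X, ¬ close A C → ∃ E : Set X, ¬ close A E ∧ ¬ close Eᶜ C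

namespace CoarseProximity

variable {X : Type u}

/-- The weak asymptotic resemblance induced by a coarse proximity. -/
def phi (P : CoarseProximity X) (A C : Set X) : Prop :=
  (∀ C' : Set X, C' ⊆ C → C' ∉ P.bounded → P.close A C') ∧
  (∀ A' : Set X, A' ⊆ A → A' ∉ P.bounded → P.close A' C)

/-- `C ≪ A` : `A` is a coarse neighbourhood of `C`. -/
def ll (P : CoarseProximity X) (C A : Set X) : Prop :=
  ¬ P.close C Aᶜ

/-- `A ⊑ C` : `A` is a coarse subset of `C`. -/
def subord (P : CoarseProximity X) (A C : Set X) : Prop :=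
  ∀ D : Set X, P.close A D → P.close C D

/-- `A ≪_w C` : `C` is a weak coarse neighbourhood of `A`. -/
def llw (P : CoarseProximity X) (A C : Set X) : Prop :=
  ∃ D : Set X, P.ll A D ∧ P.subord D C

end CoarseProximity

/-- The star of a set `A` with respect to a collection `U`. -/
def starOf {X : Type u} (A : Set X) (U : Set (Set X)) : Set X :=
  ⋃₀ {B ∈ U | (B ∩ A).Nonempty}

/-- A uniformly bounded family in a coarse proximity space. -/
def IsUnifBoundedFamily {X : Type u} (P : CoarseProximity X) (U : Set (Set X)) : Prop :=
  (∀ B ∈ U, B ∈ P.bounded) ∧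
  ∀ A C : Set X, A ⊆ starOf C U → C ⊆ starOf A U → P.phi A C

/-- A uniformly bounded cover in a coarse proximity space. -/
def IsUnifBoundedCover {X : Type u} (P : CoarseProximity X) (U : Set (Set X)) : Prop :=
  IsUnifBoundedFamily P U ∧ ⋃₀ U = Set.univ

/-- `U` refines `V` : every member of `U` is contained in some member of `V`. -/
def CoverRefines {X : Type u} (U V : Set (Set X)) : Prop :=
  ∀ A ∈ U, ∃ B ∈ V, A ⊆ B

/-- The order of a collection of sets is at most `n`. -/
def CoverOrderLE {X : Type u} (U : Set (Set X)) (n : ℕ) : Prop :=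
  ∀ (x : X) (s : Finset (Set X)), (s : Set (Set X)) ⊆ U → (∀ B ∈ s, x ∈ B) → s.card ≤ n

/-- `asdim X ≤ n` : every uniformly bounded cover refines a uniformly bounded cover of
order at most `n+1`. -/
def AsdimLE {X : Type u} (P : CoarseProximity X) (n : ℕ) : Prop :=
  ∀ U : Set (Set X), IsUnifBoundedCover P U →
    ∃ V : Set (Set X), IsUnifBoundedCover P V ∧ CoverOrderLE V (n + 1) ∧ CoverRefines U V

/-- A b-cover of a coarse proximity space. -/
def IsBCover {X : Type u} (P : CoarseProximity X) (F : Finset (Set X)) : Prop :=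
  (∀ A ∈ F, ∀ B ∈ F, A ∈ P.bounded → B ∈ P.bounded → A = B) ∧
  (⋃ A ∈ F, A) = Set.univ ∧
  ∃ C : Set X → Set X, (⋃ A ∈ F, C A) = Set.univ ∧ ∀ A ∈ F, P.ll (C A) A

/-- A finite family is divergent if the family of complements is a b-cover. -/
def DivergentFam {X : Type u} (P : CoarseProximity X) (S : Finset (Set X)) : Prop :=
  haveI : DecidableEq (Set X) := Classical.decEq _
  IsBCover P (S.image fun A => Aᶜ)

/-- A coarsely canonical cover of a coarse proximity space. -/
def IsCoarselyCanonicalCover {X : Type u} (P : CoarseProximity X) (F : Finset (Set X)) : Prop :=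
  (∀ A ∈ F, ∀ B ∈ F, A ≠ B → A ∩ B = ∅) ∧
  (⋃ A ∈ F, A) = Set.univ ∧
  (∀ A ∈ F, ∀ B ∈ F, A ∈ P.bounded → B ∈ P.bounded → A = B) ∧
  (∀ A ∈ F, A ∉ P.bounded → ∃ K : Set X, K ∉ P.bounded ∧ P.llw K A) ∧
  (∀ A ∈ F, ∀ B ∈ F, A ≠ B → ¬ ∃ K : Set X, K ∉ P.bounded ∧ P.llw K A ∧ P.llw K B) ∧
  (∀ K D : Set X, K ∉ P.bounded → P.ll K D →
    ∃ C : Set X, C ∉ P.bounded ∧ P.ll C D ∧ ∃ A ∈ F, P.llw C A)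

/-- The order of a coarsely canonical cover is at most `m` : every `m+1` of its members
form a divergent family. -/
def CCCoverOrderLE {X : Type u} (P : CoarseProximity X) (F : Finset (Set X)) (m : ℕ) : Prop :=
  ∀ S : Finset (Set X), S ⊆ F → S.card = m + 1 → DivergentFam P S

/-- `V` coarsely refines `U`. -/
def CoarselyRefines {X : Type u} (P : CoarseProximity X) (V U : Finset (Set X)) : Prop :=
  ∀ A ∈ V, A ∉ P.bounded → ∃ B ∈ U, B ∉ P.bounded ∧ ∃ D ∈ P.bounded, A \ D ⊆ B

/-- A fine directed system of coarsely canonical covers. -/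
def IsFineDirectedSystem {X : Type u} (P : CoarseProximity X) {Ω : Type v} [Preorder Ω]
    (F : Ω → Finset (Set X)) : Prop :=
  Nonempty Ω ∧
  (∀ α β : Ω, ∃ γ : Ω, α ≤ γ ∧ β ≤ γ) ∧
  (∀ α, IsCoarselyCanonicalCover P (F α)) ∧
  (∀ α β : Ω, α ≤ β → CoarselyRefines P (F β) (F α)) ∧
  (∀ U : Finset (Set X), IsBCover P U → ∃ α, CoarselyRefines P (F α) U)

/-- The metric coarse proximity relation on a metric space. -/
def MetricCoarseClose {X : Type u} [PseudoMetricSpace X] (A C : Set X) : Prop :=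
  ∃ ε : ℝ, ∀ D : Set X, Bornology.IsBounded D →
    ∃ a ∈ A \ D, ∃ c ∈ C \ D, dist a c < ε

section CPAux

open Set

variable {X : Type u} (P : CoarseProximity X)

lemma close_mono_left {A A' B : Set X} (h : P.close A B) (hs : A ⊆ A') : P.close A' B := by
  have h2 := (P.union_close_iff A A' B).mpr (Or.inl h)
  rwa [Set.union_eq_self_of_subset_left hs] at h2

lemma close_mono {A A' B B' : Set X} (h : P.close A B) (hA : A ⊆ A') (hB : B ⊆ B') :
    P.close A' B' :=
  P.symm _ _ (close_mono_left P (P.symm _ _ (close_mono_left P h hA)) hB)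

lemma not_close_right_bounded {A B : Set X} (hB : B ∈ P.bounded) : ¬ P.close A B :=
  fun h => (P.unbounded_right _ _ h) hB

lemma not_close_left_bounded {A B : Set X} (hA : A ∈ P.bounded) : ¬ P.close A B :=
  fun h => (P.unbounded_left _ _ h) hA

lemma close_union_right {A B C : Set X} (h : P.close A (B ∪ C)) :
    P.close A B ∨ P.close A C :=
  ((P.union_close_iff B C A).mp (P.symm _ _ h)).imp (P.symm _ _) (P.symm _ _)

lemma unbounded_union_cases {K B C : Set X} (hK : K ∉ P.bounded) (hsub : K ⊆ B ∪ C) :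
    K ∩ B ∉ P.bounded ∨ K ∩ C ∉ P.bounded := by
  by_contra h
  push_neg at h
  refine hK (P.subset_mem _ (P.union_mem _ h.1 _ h.2) _ ?_)
  intro x hx
  rcases hsub hx with h1 | h1
  · exact Or.inl ⟨hx, h1⟩
  · exact Or.inr ⟨hx, h1⟩

lemma biUnion_bounded (s : Finset (Set X)) (f : Set X → Set X)
    (h : ∀ B ∈ s, f B ∈ P.bounded) : (⋃ B ∈ s, f B) ∈ P.bounded := by
  classical
  induction s using Finset.induction_on with
  | empty => simpa using P.empty_mem
  | insert a s hni ih =>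
    rw [Finset.set_biUnion_insert]
    exact P.union_mem _ (h a (Finset.mem_insert_self a s)) _
      (ih fun B hB => h B (Finset.mem_insert_of_mem hB))

lemma close_biUnion {A : Set X} (s : Finset (Set X)) (h : P.close A (⋃ B ∈ s, B)) :
    ∃ B ∈ s, P.close A B := by
  classical
  induction s using Finset.induction_on with
  | empty =>
    exfalso
    refine not_close_right_bounded P (A := A) P.empty_mem ?_
    simpa using h
  | insert a s hni ih =>
    rw [Finset.set_biUnion_insert] at h
    rcases close_union_right P h with h1 | h1
    · exact ⟨a, Finset.mem_insert_self a s, h1⟩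
    · obtain ⟨B, hB, hB2⟩ := ih h1
      exact ⟨B, Finset.mem_insert_of_mem hB, hB2⟩

lemma exists_unbounded_inter {K : Set X} (s : Finset (Set X)) (hK : K ∉ P.bounded)
    (hsub : K ⊆ ⋃ B ∈ s, B) : ∃ B ∈ s, K ∩ B ∉ P.bounded := by
  by_contra h
  push_neg at h
  refine hK (P.subset_mem _ (biUnion_bounded P s (fun B => K ∩ B) h) _ ?_)
  intro x hx
  obtain ⟨B, hB, hxB⟩ : ∃ B ∈ s, x ∈ B := by simpa using hsub hx
  exact Set.mem_biUnion hB ⟨hx, hxB⟩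

lemma phi_congr {A B S : Set X} (hphi : P.phi A B) (h : P.close B S) : P.close A S := by
  by_contra hAS
  obtain ⟨W, hAW, hWS⟩ := P.strong A S hAS
  have hBsplit : P.close (B ∩ W ∪ B ∩ Wᶜ) S := by
    rwa [Set.inter_union_compl]
  rcases (P.union_close_iff _ _ S).mp hBsplit with h1 | h1
  · have hunb : B ∩ W ∉ P.bounded := P.unbounded_left _ _ h1
    exact hAW (close_mono P (hphi.1 (B ∩ W) Set.inter_subset_left hunb)
      (le_refl A) Set.inter_subset_right)
  · exact hWS (close_mono_left P h1 Set.inter_subset_right)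

lemma phi_symm {A B : Set X} (h : P.phi A B) : P.phi B A :=
  ⟨fun A' hsub hunb => P.symm _ _ (h.2 A' hsub hunb),
   fun B' hsub hunb => P.symm _ _ (h.1 B' hsub hunb)⟩

end CPAux
section GoodPartSec

open Set

variable {X : Type u} (P : CoarseProximity X)

/-- A good partition: finite, covers, pairwise disjoint, pairwise non-close,
at most one bounded member. -/
def GoodPart (F : Finset (Set X)) : Prop :=
  (⋃ A ∈ F, A) = Set.univ ∧
  (∀ A ∈ F, ∀ B ∈ F, A ≠ B → A ∩ B = ∅) ∧
  (∀ A ∈ F, ∀ B ∈ F, A ≠ B → ¬ P.close A B) ∧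
  (∀ A ∈ F, ∀ B ∈ F, A ∈ P.bounded → B ∈ P.bounded → A = B)

lemma goodPart_not_close_compl {F : Finset (Set X)} (hF : GoodPart P F) {A : Set X}
    (hA : A ∈ F) : ¬ P.close A Aᶜ := by
  classical
  intro h
  have hcompl : Aᶜ = ⋃ B ∈ F.erase A, B := by
    ext x
    simp only [Set.mem_compl_iff, Set.mem_iUnion, Finset.mem_erase, exists_prop]
    constructor
    · intro hx
      have hx2 : x ∈ (⋃ B ∈ F, B) := by rw [hF.1]; trivial
      obtain ⟨B, hB, hxB⟩ : ∃ B ∈ F, x ∈ B := by simpa using hx2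
      refine ⟨B, ⟨?_, hB⟩, hxB⟩
      rintro rfl; exact hx hxB
    · rintro ⟨B, ⟨hBA, hB⟩, hxB⟩ hxA
      have hmem : x ∈ A ∩ B := ⟨hxA, hxB⟩
      rw [hF.2.1 A hA B hB (Ne.symm hBA)] at hmem
      exact hmem
  rw [hcompl] at h
  obtain ⟨B, hB, hAB⟩ := close_biUnion P _ h
  rw [Finset.mem_erase] at hB
  exact hF.2.2.1 A hA B hB.2 (Ne.symm hB.1) hAB

lemma goodPart_ccc {F : Finset (Set X)} (hF : GoodPart P F) :
    IsCoarselyCanonicalCover P F := by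
  refine ⟨hF.2.1, hF.1, hF.2.2.2, ?_, ?_, ?_⟩
  · -- every unbounded member has an unbounded weak coarse neighbourhood witness
    intro A hA hAunb
    exact ⟨A, hAunb, A, goodPart_not_close_compl P hF hA, fun D h => h⟩
  · -- no common weak neighbourhood witness for two members
    rintro A hA B hB hne ⟨K, hKunb, ⟨D1, hll1, hsub1⟩, ⟨D2, hll2, hsub2⟩⟩
    have hKc : K ∩ (D1 ∩ D2)ᶜ ∈ P.bounded := by
      by_contra hc
      have hcl : P.close K (D1 ∩ D2)ᶜ := P.inter_close _ _ hc
      rw [Set.compl_inter] at hcl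
      rcases close_union_right P hcl with h | h
      · exact hll1 h
      · exact hll2 h
    have hK1 : K ∩ (D1 ∩ D2) ∉ P.bounded := by
      by_contra hb
      refine hKunb (P.subset_mem _ (P.union_mem _ hb _ hKc) _ ?_)
      intro x hx
      by_cases hxd : x ∈ D1 ∩ D2
      · exact Or.inl ⟨hx, hxd⟩
      · exact Or.inr ⟨hx, hxd⟩
    have hclD1 : P.close D1 (K ∩ (D1 ∩ D2)) := by
      refine P.inter_close _ _ ?_
      intro hb
      refine hK1 (P.subset_mem _ hb _ ?_)
      intro x hx
      exact ⟨hx.2.1, hx⟩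
    have hclA : P.close A (K ∩ (D1 ∩ D2)) := hsub1 _ hclD1
    have hclD2A : P.close D2 A :=
      close_mono_left P (P.symm _ _ hclA) (fun x hx => hx.2.2)
    have : P.close B A := hsub2 _ hclD2A
    exact hF.2.2.1 A hA B hB hne (P.symm _ _ this)
  · -- canonicity
    intro K D hKunb hll
    have hKD : K ∩ D ∉ P.bounded := by
      by_contra hb
      have hKc : K ∩ Dᶜ ∈ P.bounded := by
        by_contra hc
        exact hll (P.inter_close _ _ hc)
      refine hKunb (P.subset_mem _ (P.union_mem _ hb _ hKc) _ ?_)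
      intro x hx
      by_cases hxd : x ∈ D
      · exact Or.inl ⟨hx, hxd⟩
      · exact Or.inr ⟨hx, hxd⟩
    have hsub : K ∩ D ⊆ ⋃ B ∈ F, B := by rw [hF.1]; exact fun x _ => trivial
    obtain ⟨E, hE, hEunb⟩ := exists_unbounded_inter P F hKD hsub
    refine ⟨K ∩ D ∩ E, hEunb, ?_, E, hE, E, ?_, fun D' h => h⟩
    · intro h
      exact hll (close_mono_left P h (fun x hx => hx.1.1))
    · intro h
      exact goodPart_not_close_compl P hF hE
        (close_mono_left P h (fun x hx => hx.2))

lemma goodPart_order {F : Finset (Set X)} (hTop : Set.univ ∉ P.bounded)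
    (hF : GoodPart P F) : CCCoverOrderLE P F 1 := by
  classical
  intro S hS hcard
  obtain ⟨A, B, hne, rfl⟩ := Finset.card_eq_two.mp hcard
  have hA : A ∈ F := hS (Finset.mem_insert_self _ _)
  have hB : B ∈ F := hS (by simp)
  have hncl : ¬ P.close A B := hF.2.2.1 A hA B hB hne
  obtain ⟨W, hAW, hWB⟩ := P.strong A B hncl
  have hcne : Aᶜ ≠ Bᶜ := fun h => hne (compl_injective h)
  have hab : A ∩ B = ∅ := hF.2.1 A hA B hB hne
  have huniv : Aᶜ ∪ Bᶜ = Set.univ := by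
    rw [← Set.compl_inter, hab, Set.compl_empty]
  have himg : (({A, B} : Finset (Set X)).image fun A => Aᶜ) = {Aᶜ, Bᶜ} := by
    simp [Finset.image_insert]
  unfold DivergentFam
  convert_to IsBCover P {Aᶜ, Bᶜ} using 2
  · convert himg
  refine ⟨?_, ?_, ?_⟩
  · -- at most one bounded member
    intro Z hZ Z' hZ' hZb hZ'b
    simp only [Finset.mem_insert, Finset.mem_singleton] at hZ hZ'
    rcases hZ with rfl | rfl <;> rcases hZ' with rfl | rfl
    · rfl
    · exact absurd (huniv ▸ P.union_mem _ hZb _ hZ'b) hTop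
    · exact absurd ((Set.union_comm _ _ ▸ huniv) ▸ P.union_mem _ hZb _ hZ'b) hTop
    · rfl
  · -- covers
    rw [Finset.set_biUnion_insert, Finset.set_biUnion_singleton]
    exact huniv
  · -- the C function
    refine ⟨fun Z => if Z = Aᶜ then W else Wᶜ, ?_, ?_⟩
    · rw [Finset.set_biUnion_insert, Finset.set_biUnion_singleton,
        if_pos rfl, if_neg hcne.symm, Set.union_compl_self]
    · intro Z hZ
      simp only [Finset.mem_insert, Finset.mem_singleton] at hZ
      rcases hZ with rfl | rfl
      · show ¬ P.close (if Aᶜ = Aᶜ then W else Wᶜ) (Aᶜ)ᶜ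
        rw [if_pos rfl, compl_compl]
        intro h
        exact hAW (P.symm _ _ h)
      · show ¬ P.close (if Bᶜ = Aᶜ then W else Wᶜ) (Bᶜ)ᶜ
        rw [if_neg hcne.symm, compl_compl]
        exact hWB

lemma goodPart_univ : GoodPart P ({Set.univ} : Finset (Set X)) := by
  refine ⟨by simp, ?_, ?_, ?_⟩
  · intro A hA B hB hne
    simp only [Finset.mem_singleton] at hA hB
    exact absurd (hA.trans hB.symm) hne
  · intro A hA B hB hne
    simp only [Finset.mem_singleton] at hA hB
    exact absurd (hA.trans hB.symm) hne
  · intro A hA B hB _ _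
    simp only [Finset.mem_singleton] at hA hB
    exact hA.trans hB.symm

/-- pre-good family: covers, pairwise disjoint, pairwise non-close. -/
def PreGood (W : Finset (Set X)) : Prop :=
  (⋃ A ∈ W, A) = Set.univ ∧
  (∀ A ∈ W, ∀ B ∈ W, A ≠ B → A ∩ B = ∅) ∧
  (∀ A ∈ W, ∀ B ∈ W, A ≠ B → ¬ P.close A B)

lemma preGood_to_good {W : Finset (Set X)} (hW : PreGood P W) :
    ∃ H : Finset (Set X), GoodPart P H ∧ ∀ Z ∈ H, Z ∉ P.bounded → Z ∈ W := by
  classical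
  set Wf : Finset (Set X) := W.filter (fun A => A ∉ P.bounded) with hWf
  set Rc : Set X := (⋃ A ∈ Wf, A)ᶜ with hRc
  have hRcb : Rc ∈ P.bounded := by
    refine P.subset_mem _ (biUnion_bounded P (W.filter (fun A => A ∈ P.bounded)) id ?_) _ ?_
    · intro B hB
      exact (Finset.mem_filter.mp hB).2
    · intro x hx
      have : x ∈ (⋃ A ∈ W, A) := by rw [hW.1]; trivial
      obtain ⟨B, hB, hxB⟩ : ∃ B ∈ W, x ∈ B := by simpa using this
      by_cases hb : B ∈ P.bounded
      · exact Set.mem_biUnion (Finset.mem_filter.mpr ⟨hB, hb⟩) hxB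
      · exfalso
        exact hx (Set.mem_biUnion (Finset.mem_filter.mpr ⟨hB, hb⟩) hxB)
  have hRcnotin : Rc ∉ Wf := by
    intro h
    exact (Finset.mem_filter.mp h).2 hRcb
  refine ⟨insert Rc Wf, ⟨?_, ?_, ?_, ?_⟩, ?_⟩
  · rw [Finset.set_biUnion_insert]
    rw [hRc, Set.compl_union_self]
  · intro A hA B hB hne
    rw [Finset.mem_insert] at hA hB
    rcases hA with rfl | hA <;> rcases hB with rfl | hB
    · exact absurd rfl hne
    · apply Set.eq_empty_of_subset_empty
      intro x ⟨hx1, hx2⟩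
      exact hx1 (Set.mem_biUnion hB hx2)
    · apply Set.eq_empty_of_subset_empty
      intro x ⟨hx1, hx2⟩
      exact hx2 (Set.mem_biUnion hA hx1)
    · exact hW.2.1 A (Finset.mem_filter.mp hA).1 B (Finset.mem_filter.mp hB).1 hne
  · intro A hA B hB hne
    rw [Finset.mem_insert] at hA hB
    rcases hA with rfl | hA <;> rcases hB with rfl | hB
    · exact absurd rfl hne
    · exact not_close_left_bounded P hRcb
    · exact not_close_right_bounded P hRcb
    · exact hW.2.2 A (Finset.mem_filter.mp hA).1 B (Finset.mem_filter.mp hB).1 hne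
  · intro A hA B hB hAb hBb
    rw [Finset.mem_insert] at hA hB
    rcases hA with rfl | hA
    · rcases hB with rfl | hB
      · rfl
      · exact absurd hBb (Finset.mem_filter.mp hB).2
    · exact absurd hAb (Finset.mem_filter.mp hA).2
  · intro Z hZ hZunb
    rw [Finset.mem_insert] at hZ
    rcases hZ with rfl | hZ
    · exact absurd hRcb hZunb
    · exact (Finset.mem_filter.mp hZ).1

lemma coarselyRefines_refl (F : Finset (Set X)) : CoarselyRefines P F F := by
  intro A hA hAunb
  exact ⟨A, hA, hAunb, ∅, P.empty_mem, by simp⟩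

lemma coarselyRefines_trans {F G H : Finset (Set X)} (h1 : CoarselyRefines P G F)
    (h2 : CoarselyRefines P H G) : CoarselyRefines P H F := by
  intro A hA hAunb
  obtain ⟨B, hB, hBunb, D, hD, hAD⟩ := h2 A hA hAunb
  obtain ⟨C, hC, hCunb, D', hD', hBD⟩ := h1 B hB hBunb
  refine ⟨C, hC, hCunb, D ∪ D', P.union_mem _ hD _ hD', ?_⟩
  intro x ⟨hx1, hx2⟩
  rw [Set.mem_union] at hx2
  push_neg at hx2
  exact hBD ⟨hAD ⟨hx1, hx2.1⟩, hx2.2⟩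

lemma goodPart_common_refinement {F G : Finset (Set X)} (hF : GoodPart P F)
    (hG : GoodPart P G) :
    ∃ H : Finset (Set X), GoodPart P H ∧ CoarselyRefines P H F ∧ CoarselyRefines P H G := by
  classical
  set W : Finset (Set X) := Finset.image₂ (fun A B => A ∩ B) F G with hWdef
  have hmem : ∀ Z ∈ W, ∃ A ∈ F, ∃ B ∈ G, Z = A ∩ B := by
    intro Z hZ
    obtain ⟨A, hA, B, hB, hZ⟩ := Finset.mem_image₂.mp hZ
    exact ⟨A, hA, B, hB, hZ.symm⟩
  have hpre : PreGood P W := by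
    refine ⟨?_, ?_, ?_⟩
    · apply Set.eq_univ_of_univ_subset
      intro x _
      have hx1 : x ∈ (⋃ A ∈ F, A) := by rw [hF.1]; trivial
      have hx2 : x ∈ (⋃ B ∈ G, B) := by rw [hG.1]; trivial
      obtain ⟨A, hA, hxA⟩ : ∃ A ∈ F, x ∈ A := by simpa using hx1
      obtain ⟨B, hB, hxB⟩ : ∃ B ∈ G, x ∈ B := by simpa using hx2
      exact Set.mem_biUnion (Finset.mem_image₂.mpr ⟨A, hA, B, hB, rfl⟩) ⟨hxA, hxB⟩
    · intro Z hZ Z' hZ' hne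
      obtain ⟨A, hA, B, hB, rfl⟩ := hmem Z hZ
      obtain ⟨A', hA', B', hB', rfl⟩ := hmem Z' hZ'
      by_cases hAA : A = A'
      · by_cases hBB : B = B'
        · exact absurd (by rw [hAA, hBB]) hne
        · have := hG.2.1 B hB B' hB' hBB
          apply Set.eq_empty_of_subset_empty
          intro x hx
          rw [← this]
          exact ⟨hx.1.2, hx.2.2⟩
      · have := hF.2.1 A hA A' hA' hAA
        apply Set.eq_empty_of_subset_empty
        intro x hx
        rw [← this]
        exact ⟨hx.1.1, hx.2.1⟩
    · intro Z hZ Z' hZ' hne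
      obtain ⟨A, hA, B, hB, rfl⟩ := hmem Z hZ
      obtain ⟨A', hA', B', hB', rfl⟩ := hmem Z' hZ'
      by_cases hAA : A = A'
      · by_cases hBB : B = B'
        · exact absurd (by rw [hAA, hBB]) hne
        · intro h
          exact hG.2.2.1 B hB B' hB' hBB
            (close_mono P h Set.inter_subset_right Set.inter_subset_right)
      · intro h
        exact hF.2.2.1 A hA A' hA' hAA
          (close_mono P h Set.inter_subset_left Set.inter_subset_left)
  obtain ⟨H, hH, hHW⟩ := preGood_to_good P hpre
  refine ⟨H, hH, ?_, ?_⟩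
  · intro Z hZ hZunb
    obtain ⟨A, hA, B, hB, rfl⟩ := hmem Z (hHW Z hZ hZunb)
    refine ⟨A, hA, ?_, ∅, P.empty_mem, by simp⟩
    intro hAb
    exact hZunb (P.subset_mem _ hAb _ Set.inter_subset_left)
  · intro Z hZ hZunb
    obtain ⟨A, hA, B, hB, rfl⟩ := hmem Z (hHW Z hZ hZunb)
    refine ⟨B, hB, ?_, ∅, P.empty_mem, by simp⟩
    intro hBb
    exact hZunb (P.subset_mem _ hBb _ Set.inter_subset_right)

end GoodPartSec
section MetricSec

open Set Metric

variable {X : Type u} [MetricSpace X] (P : CoarseProximity X)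

/-- The cover of `X` by closed balls of radius `r`. -/
def ballsC (r : ℝ) : Set (Set X) := Set.range (fun x : X => Metric.closedBall x r)

lemma mem_starOf {x : X} {A : Set X} {U : Set (Set X)} :
    x ∈ starOf A U ↔ ∃ B ∈ U, (B ∩ A).Nonempty ∧ x ∈ B := by
  unfold starOf
  simp only [Set.mem_sUnion, Set.mem_setOf_eq]
  constructor
  · rintro ⟨B, ⟨hBU, hBA⟩, hxB⟩; exact ⟨B, hBU, hBA, hxB⟩
  · rintro ⟨B, hBU, hBA, hxB⟩; exact ⟨B, ⟨hBU, hBA⟩, hxB⟩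

lemma starOf_union_subset {A : Set X} {U V : Set (Set X)} :
    starOf A (U ∪ V) ⊆ starOf A U ∪ starOf A V := by
  intro x hx
  obtain ⟨B, hBU, hBA, hxB⟩ := mem_starOf.mp hx
  rcases hBU with h | h
  · exact Or.inl (mem_starOf.mpr ⟨B, h, hBA, hxB⟩)
  · exact Or.inr (mem_starOf.mpr ⟨B, h, hBA, hxB⟩)

lemma starOf_balls_subset {A : Set X} {r : ℝ} :
    starOf A (ballsC (X := X) r) ⊆ {x | ∃ a ∈ A, dist x a ≤ 2 * r} := by
  intro x hx
  obtain ⟨B, hBU, ⟨z, hz⟩, hxB⟩ := mem_starOf.mp hx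
  obtain ⟨y, rfl⟩ := hBU
  refine ⟨z, hz.2, ?_⟩
  calc dist x z ≤ dist x y + dist y z := dist_triangle _ _ _
    _ ≤ r + r := add_le_add (mem_closedBall.mp hxB) (by
        have := mem_closedBall.mp hz.1; rwa [dist_comm])
    _ = 2 * r := by ring

variable (hbornology : ∀ A : Set X, A ∈ P.bounded ↔ Bornology.IsBounded A)
variable (hclose : ∀ A C : Set X, P.close A C ↔ MetricCoarseClose A C)

include hbornology hclose

lemma closeNear {r : ℝ} (hr : 0 ≤ r) {As Cs : Set X}
    (hsub : ∀ c ∈ Cs, ∃ a ∈ As, dist a c ≤ r) (hC : Cs ∉ P.bounded) : P.close As Cs := by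
  rw [hclose]
  refine ⟨r + 1, fun D hD => ?_⟩
  obtain ⟨c₀, hc₀⟩ : Cs.Nonempty := by
    rw [Set.nonempty_iff_ne_empty]
    rintro rfl
    exact hC P.empty_mem
  obtain ⟨R, hR⟩ := hD.subset_closedBall c₀
  set R' : ℝ := max R 0 + r + 1 with hR'
  have hDsub : D ⊆ Metric.closedBall c₀ R' := by
    refine hR.trans (Metric.closedBall_subset_closedBall ?_)
    have : R ≤ max R 0 := le_max_left _ _
    linarith
  obtain ⟨c, hcCs, hcD'⟩ : ∃ c ∈ Cs, c ∉ Metric.closedBall c₀ R' := by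
    by_contra h
    push_neg at h
    exact hC ((hbornology Cs).mpr (Metric.isBounded_closedBall.subset h))
  obtain ⟨a, haAs, hac⟩ := hsub c hcCs
  have hcD : c ∉ D := fun h => hcD' (hDsub h)
  have haD : a ∉ D := by
    intro h
    apply hcD'
    have h1 : dist a c₀ ≤ max R 0 := by
      have := hR h
      rw [Metric.mem_closedBall] at this
      exact this.trans (le_max_left _ _)
    rw [Metric.mem_closedBall]
    calc dist c c₀ ≤ dist c a + dist a c₀ := dist_triangle _ _ _
      _ ≤ r + max R 0 := add_le_add (by rwa [dist_comm]) h1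
      _ ≤ R' := by rw [hR']; linarith
  exact ⟨a, ⟨haAs, haD⟩, c, ⟨hcCs, hcD⟩, by
    calc dist a c ≤ r := hac
      _ < r + 1 := by linarith⟩

lemma ubc_balls {r : ℝ} (hr : 0 ≤ r) : IsUnifBoundedCover P (ballsC (X := X) r) := by
  constructor
  · constructor
    · rintro B ⟨x, rfl⟩
      exact (hbornology _).mpr Metric.isBounded_closedBall
    · intro A C hAst hCst
      constructor
      · intro C' hC'sub hC'unb
        refine closeNear P hbornology hclose (r := 2 * r) (by linarith) ?_ hC'unb
        intro c hc
        obtain ⟨a, ha, hd⟩ := starOf_balls_subset (hCst (hC'sub hc))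
        exact ⟨a, ha, by rwa [dist_comm]⟩
      · intro A' hA'sub hA'unb
        refine P.symm _ _ (closeNear P hbornology hclose (r := 2 * r) (by linarith) ?_ hA'unb)
        intro a ha
        obtain ⟨c, hc, hd⟩ := starOf_balls_subset (hAst (hA'sub ha))
        exact ⟨c, hc, by rwa [dist_comm]⟩
  · apply Set.eq_univ_of_univ_subset
    intro x _
    exact ⟨Metric.closedBall x r, ⟨x, rfl⟩, Metric.mem_closedBall_self hr⟩

lemma ubc_hybrid {V : Set (Set X)} (hV : IsUnifBoundedCover P V) {r : ℝ} (hr : 0 ≤ r) :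
    IsUnifBoundedCover P (V ∪ ballsC (X := X) r) := by
  constructor
  · constructor
    · rintro B (hB | ⟨x, rfl⟩)
      · exact hV.1.1 B hB
      · exact (hbornology _).mpr Metric.isBounded_closedBall
    · intro A C hAst hCst
      constructor
      · intro C' hC'sub hC'unb
        have hsplit : C' ⊆ {x | ∃ a ∈ A, dist x a ≤ 2 * r} ∪ starOf A V := by
          intro c hc
          rcases starOf_union_subset (hCst (hC'sub hc)) with h | h
          · exact Or.inr h
          · exact Or.inl (starOf_balls_subset h)
        rcases unbounded_union_cases P hC'unb hsplit with h | h
        · have hcl : P.close A (C' ∩ {x | ∃ a ∈ A, dist x a ≤ 2 * r}) := by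
            refine closeNear P hbornology hclose (r := 2 * r) (by linarith) ?_ h
            rintro c ⟨hc, a, ha, hd⟩
            exact ⟨a, ha, by rwa [dist_comm]⟩
          exact close_mono P hcl (le_refl A) Set.inter_subset_left
        · set Cq := C' ∩ starOf A V with hCq
          have hT2 : Cq ⊆ starOf (starOf Cq V ∩ A) V := by
            rintro c ⟨hc1, hc2⟩
            obtain ⟨v, hvV, ⟨a, hav, haA⟩, hcv⟩ := mem_starOf.mp hc2
            have haT : a ∈ starOf Cq V ∩ A :=
              ⟨mem_starOf.mpr ⟨v, hvV, ⟨c, hcv, hc1, hc2⟩, hav⟩, haA⟩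
            exact mem_starOf.mpr ⟨v, hvV, ⟨a, hav, haT⟩, hcv⟩
          have hphi := hV.1.2 (starOf Cq V ∩ A) Cq Set.inter_subset_left hT2
          have hcl := hphi.1 Cq (le_refl Cq) h
          exact close_mono P hcl Set.inter_subset_right Set.inter_subset_left
      · intro A' hA'sub hA'unb
        have hsplit : A' ⊆ {x | ∃ c ∈ C, dist x c ≤ 2 * r} ∪ starOf C V := by
          intro a ha
          rcases starOf_union_subset (hAst (hA'sub ha)) with h | h
          · exact Or.inr h
          · exact Or.inl (starOf_balls_subset h)
        rcases unbounded_union_cases P hA'unb hsplit with h | h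
        · have hcl : P.close C (A' ∩ {x | ∃ c ∈ C, dist x c ≤ 2 * r}) := by
            refine closeNear P hbornology hclose (r := 2 * r) (by linarith) ?_ h
            rintro a ⟨ha, c, hc, hd⟩
            exact ⟨c, hc, by rwa [dist_comm]⟩
          exact close_mono P (P.symm _ _ hcl) Set.inter_subset_left (le_refl C)
        · set Aq := A' ∩ starOf C V with hAq
          have hT2 : Aq ⊆ starOf (starOf Aq V ∩ C) V := by
            rintro a ⟨ha1, ha2⟩
            obtain ⟨v, hvV, ⟨c, hcv, hcC⟩, hav⟩ := mem_starOf.mp ha2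
            have hcT : c ∈ starOf Aq V ∩ C :=
              ⟨mem_starOf.mpr ⟨v, hvV, ⟨a, hav, ha1, ha2⟩, hcv⟩, hcC⟩
            exact mem_starOf.mpr ⟨v, hvV, ⟨c, hcv, hcT⟩, hav⟩
          have hphi := hV.1.2 (starOf Aq V ∩ C) Aq Set.inter_subset_left hT2
          have hcl := hphi.1 Aq (le_refl Aq) h
          exact close_mono P (P.symm _ _ hcl) Set.inter_subset_left Set.inter_subset_right
  · apply Set.eq_univ_of_univ_subset
    rw [← hV.2]
    intro x hx
    obtain ⟨B, hB, hxB⟩ := hx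
    exact ⟨B, Or.inl hB, hxB⟩

end MetricSec

/-- Generic chain construction. -/
noncomputable def chainAux {β : Type w} (Q : ℕ → β → Prop) (R : β → β → Prop)
    (h0 : {W : β // Q 0 W})
    (hs : ∀ n (W : β), Q n W → {W' : β // Q (n + 1) W' ∧ R W W'}) :
    ∀ n : ℕ, {W : β // Q n W}
  | 0 => h0
  | n + 1 => ⟨(hs n (chainAux Q R h0 hs n).1 (chainAux Q R h0 hs n).2).1,
      (hs n (chainAux Q R h0 hs n).1 (chainAux Q R h0 hs n).2).2.1⟩

lemma chainAux_rel {β : Type w} (Q : ℕ → β → Prop) (R : β → β → Prop)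
    (h0 : {W : β // Q 0 W})
    (hs : ∀ n (W : β), Q n W → {W' : β // Q (n + 1) W' ∧ R W W'}) (n : ℕ) :
    R (chainAux Q R h0 hs n).1 (chainAux Q R h0 hs (n + 1)).1 :=
  (hs n (chainAux Q R h0 hs n).1 (chainAux Q R h0 hs n).2).2.2
section MainRefine

open Set Metric

lemma main_refine {X : Type u} [MetricSpace X] (P : CoarseProximity X)
    (hbornology : ∀ A : Set X, A ∈ P.bounded ↔ Bornology.IsBounded A)
    (hclose : ∀ A C : Set X, P.close A C ↔ MetricCoarseClose A C)
    (hasdim : AsdimLE P 0) :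
    ∀ U : Finset (Set X), IsBCover P U → ∃ H, GoodPart P H ∧ CoarselyRefines P H U := by
  classical
  -- the chain of partitions
  set Q : ℕ → Set (Set X) → Prop := fun n W =>
    IsUnifBoundedCover P W ∧ CoverOrderLE W 1 ∧ CoverRefines (ballsC (X := X) ((n : ℝ) + 1)) W
    with hQdef
  have h0 : ∃ W, Q 0 W := by
    obtain ⟨V0, h1, h2, h3⟩ := hasdim (ballsC (X := X) (((0 : ℕ) : ℝ) + 1))
      (ubc_balls P hbornology hclose (by norm_num))
    exact ⟨V0, h1, h2, h3⟩
  have hstep : ∀ n (W : Set (Set X)), Q n W → ∃ W', Q (n + 1) W' ∧ CoverRefines W W' := by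
    intro n W hW
    obtain ⟨V', h1, h2, h3⟩ := hasdim (W ∪ ballsC (X := X) ((n : ℝ) + 2))
      (ubc_hybrid P hbornology hclose hW.1 (by positivity))
    refine ⟨V', ⟨h1, h2, ?_⟩, fun A hA => h3 A (Or.inl hA)⟩
    rw [show (((n + 1 : ℕ) : ℝ) + 1) = (n : ℝ) + 2 by push_cast; ring]
    exact fun A hA => h3 A (Or.inr hA)
  set chain : ∀ n : ℕ, {W : Set (Set X) // Q n W} :=
    chainAux Q CoverRefines (Classical.indefiniteDescription _ h0)
      (fun n W hW => Classical.indefiniteDescription _ (hstep n W hW)) with hchaindef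
  set Vf : ℕ → Set (Set X) := fun n => (chain n).1 with hVfdef
  have hQn : ∀ n, Q n (Vf n) := fun n => (chain n).2
  have hnest : ∀ n, CoverRefines (Vf n) (Vf (n + 1)) := fun n =>
    chainAux_rel Q CoverRefines _ _ n
  -- pieces
  have hex : ∀ (n : ℕ) (x : X), ∃ W ∈ Vf n, x ∈ W := by
    intro n x
    have hx : x ∈ ⋃₀ Vf n := by rw [(hQn n).1.2]; trivial
    exact hx
  choose pc hpcV hpcx using hex
  have huniq : ∀ (n : ℕ) (W W' : Set X), W ∈ Vf n → W' ∈ Vf n →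
      ∀ x, x ∈ W → x ∈ W' → W = W' := by
    intro n W W' hW hW' x hxW hxW'
    by_contra hne
    have hsub : (({W, W'} : Finset (Set X)) : Set (Set X)) ⊆ Vf n := by
      intro B hB
      simp only [Finset.coe_insert, Finset.coe_singleton, Set.mem_insert_iff,
        Set.mem_singleton_iff] at hB
      rcases hB with rfl | rfl
      · exact hW
      · exact hW'
    have hmem : ∀ B ∈ ({W, W'} : Finset (Set X)), x ∈ B := by
      intro B hB
      simp only [Finset.mem_insert, Finset.mem_singleton] at hB
      rcases hB with rfl | rfl
      · exact hxW
      · exact hxW'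
    have := (hQn n).2.1 x {W, W'} hsub hmem
    rw [Finset.card_pair hne] at this
    omega
  have hpc_eq : ∀ (n : ℕ) (x y : X), dist x y ≤ (n : ℝ) + 1 → pc n x = pc n y := by
    intro n x y hd
    obtain ⟨W, hWV, hsubW⟩ := (hQn n).2.2 (Metric.closedBall x ((n : ℝ) + 1)) ⟨x, rfl⟩
    have hxW : x ∈ W := hsubW (Metric.mem_closedBall_self (by positivity))
    have hyW : y ∈ W := hsubW (by rw [Metric.mem_closedBall, dist_comm]; exact hd)
    rw [huniq n (pc n x) W (hpcV n x) hWV x (hpcx n x) hxW,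
      huniq n (pc n y) W (hpcV n y) hWV y (hpcx n y) hyW]
  have hpc_sub : ∀ (n : ℕ) (x : X), pc n x ⊆ pc (n + 1) x := by
    intro n x
    obtain ⟨W, hWV, hsubW⟩ := hnest n (pc n x) (hpcV n x)
    have hxW : x ∈ W := hsubW (hpcx n x)
    rw [huniq (n + 1) (pc (n + 1) x) W (hpcV (n + 1) x) hWV x (hpcx (n + 1) x) hxW]
    exact hsubW
  have hpc_mono : ∀ (m n : ℕ) (x : X), m ≤ n → pc m x ⊆ pc n x := by
    intro m n x h
    induction n with
    | zero => rw [Nat.le_zero.mp h]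
    | succ k ih =>
      rcases Nat.lt_or_ge m (k + 1) with h' | h'
      · exact (ih (Nat.lt_succ_iff.mp h')).trans (hpc_sub k x)
      · rw [le_antisymm h h']
  -- stars
  set Sst : ℕ → Set X → Set X := fun n S => {x | (pc n x ∩ S).Nonempty} with hSstdef
  have hphiSst : ∀ (n : ℕ) (S : Set X), P.phi (Sst n S) S := by
    intro n S
    refine (hQn n).1.1.2 (Sst n S) S ?_ ?_
    · intro x hx
      exact mem_starOf.mpr ⟨pc n x, hpcV n x, hx, hpcx n x⟩
    · intro s hs
      exact mem_starOf.mpr ⟨pc n s, hpcV n s, ⟨s, hpcx n s, ⟨s, hpcx n s, hs⟩⟩, hpcx n s⟩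
  have hSst_mono : ∀ (m n : ℕ) (S : Set X), m ≤ n → Sst m S ⊆ Sst n S := by
    intro m n S h x hx
    obtain ⟨z, hz1, hz2⟩ := hx
    exact ⟨z, hpc_mono m n x h hz1, hz2⟩
  have hnotcloseSst : ∀ (S T : Set X), ¬ P.close S T → ∀ m m' : ℕ,
      ¬ P.close (Sst m S) (Sst m' T) := by
    intro S T h m m' hcl
    have c1 : P.close S (Sst m' T) := phi_congr P (phi_symm P (hphiSst m S)) hcl
    have c3 : P.close T S := phi_congr P (phi_symm P (hphiSst m' T)) (P.symm _ _ c1)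
    exact h (P.symm _ _ c3)
  -- the key separation lemma
  have KL : ∀ S T : Set X, ¬ P.close S T →
      ∃ Pa : Set X, ¬ P.close Pa Paᶜ ∧ S ⊆ Pa ∧ (T ∩ Pa) ∈ P.bounded := by
    intro S T hST
    set contact : ℕ → X → Prop := fun n x => (pc n x ∩ (S ∪ T)).Nonempty with hcontactdef
    set Pa : Set X := {x | ∃ m, (pc m x ∩ S).Nonempty ∧ ∀ k < m, ¬ contact k x} with hPadef
    have hSPa : S ⊆ Pa := by
      intro x hx
      exact ⟨0, ⟨x, hpcx 0 x, hx⟩, fun k hk => absurd hk (Nat.not_lt_zero k)⟩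
    have hTPa : T ∩ Pa ⊆ Sst 0 S ∩ T := by
      rintro x ⟨hxT, m, hmS, hmin⟩
      have hc0 : contact 0 x := ⟨x, hpcx 0 x, Or.inr hxT⟩
      have hm0 : m = 0 := by
        by_contra h
        exact hmin 0 (Nat.pos_of_ne_zero h) hc0
      rw [hm0] at hmS
      exact ⟨hmS, hxT⟩
    have hbdd : (Sst 0 S ∩ T) ∈ P.bounded := by
      by_contra h
      exact hST (phi_congr P (phi_symm P (hphiSst 0 S)) (P.inter_close _ _ h))
    refine ⟨Pa, ?_, hSPa, P.subset_mem _ hbdd _ (fun x hx => hTPa ⟨hx.1, hx.2⟩)⟩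
    intro hcl
    rw [hclose] at hcl
    obtain ⟨ε, hε⟩ := hcl
    set m : ℕ := ⌈ε⌉₊ with hmdef
    have hεm : ε ≤ (m : ℝ) := Nat.le_ceil ε
    have hncl2 : ¬ P.close (Sst m S) (Sst m T) := hnotcloseSst S T hST m m
    rw [hclose] at hncl2
    unfold MetricCoarseClose at hncl2
    push_neg at hncl2
    obtain ⟨D, hD, hsep⟩ := hncl2 ((m : ℝ) + 1)
    obtain ⟨a, ⟨haP, haD⟩, b, ⟨hbP, hbD⟩, hab⟩ := hε D hD
    have hdist : dist a b ≤ (m : ℝ) := le_of_lt (lt_of_lt_of_le hab hεm)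
    have hsame : ∀ k, m ≤ k → pc k a = pc k b := by
      intro k hk
      refine hpc_eq k a b (hdist.trans ?_)
      have : (m : ℝ) ≤ (k : ℝ) := Nat.cast_le.mpr hk
      linarith
    obtain ⟨ma, hmaS, hmamin⟩ := haP
    have hcma : contact ma a := by
      obtain ⟨z, hz1, hz2⟩ := hmaS
      exact ⟨z, hz1, Or.inl hz2⟩
    have hfinal : a ∈ Sst m S → b ∈ Sst m T → False := by
      intro h1 h2
      have := hsep a ⟨h1, haD⟩ b ⟨h2, hbD⟩
      have hlt : dist a b < (m : ℝ) + 1 := by linarith [hdist]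
      linarith
    have hcb : ∃ k, contact k b := by
      refine ⟨max m ma, ?_⟩
      have heq := hsame (max m ma) (le_max_left m ma)
      rw [show contact (max m ma) b = (pc (max m ma) b ∩ (S ∪ T)).Nonempty from rfl, ← heq]
      obtain ⟨z, hz1, hz2⟩ := hcma
      exact ⟨z, hpc_mono ma (max m ma) a (le_max_right m ma) hz1, hz2⟩
    haveI : DecidablePred fun k => contact k b := fun _ => Classical.propDecidable _
    set mb := Nat.find hcb with hmbdef
    have hmbc : contact mb b := Nat.find_spec hcb
    have hmbmin : ∀ k < mb, ¬ contact k b := fun k hk => Nat.find_min hcb hk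
    have hbS : ¬ (pc mb b ∩ S).Nonempty := fun hS' => hbP ⟨mb, hS', hmbmin⟩
    have hbT : (pc mb b ∩ T).Nonempty := by
      obtain ⟨z, hz1, hz2 | hz2⟩ := hmbc
      · exact absurd ⟨z, hz1, hz2⟩ hbS
      · exact ⟨z, hz1, hz2⟩
    by_cases hma : ma ≤ m
    · have ha' : a ∈ Sst m S := by
        obtain ⟨z, hz1, hz2⟩ := hmaS
        exact ⟨z, hpc_mono ma m a hma hz1, hz2⟩
      have hcmb' : contact m b := by
        rw [show contact m b = (pc m b ∩ (S ∪ T)).Nonempty from rfl, ← hsame m le_rfl]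
        obtain ⟨z, hz1, hz2⟩ := hcma
        exact ⟨z, hpc_mono ma m a hma hz1, hz2⟩
      have hmbm : mb ≤ m := Nat.find_min' hcb hcmb'
      have hb' : b ∈ Sst m T := by
        obtain ⟨z, hz1, hz2⟩ := hbT
        exact ⟨z, hpc_mono mb m b hmbm hz1, hz2⟩
      exact hfinal ha' hb'
    · push_neg at hma
      have hmb' : m < mb := by
        by_contra h
        push_neg at h
        have hca : contact m a := by
          rw [show contact m a = (pc m a ∩ (S ∪ T)).Nonempty from rfl, hsame m le_rfl]
          obtain ⟨z, hz1, hz2⟩ := hmbc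
          exact ⟨z, hpc_mono mb m b h hz1, hz2⟩
        exact hmamin m hma hca
      have h1 : contact ma b := by
        rw [show contact ma b = (pc ma b ∩ (S ∪ T)).Nonempty from rfl, ← hsame ma hma.le]
        exact hcma
      have hmba : mb ≤ ma := Nat.find_min' hcb h1
      have h2 : contact mb a := by
        rw [show contact mb a = (pc mb a ∩ (S ∪ T)).Nonempty from rfl, hsame mb hmb'.le]
        exact hmbc
      have hamb : ma ≤ mb := by
        by_contra h
        push_neg at h
        exact hmamin mb h h2
      have heq : ma = mb := le_antisymm hamb hmba
      refine hbS ?_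
      rw [← heq, ← hsame ma hma.le]
      exact hmaS
  -- the main construction
  intro U hU
  obtain ⟨hbdduniq, hcov, Cf, hCcov, hCll⟩ := hU
  have hKL' : ∀ A ∈ U, ∃ Pa : Set X, ¬ P.close Pa Paᶜ ∧ Cf A ⊆ Pa ∧ (Aᶜ ∩ Pa) ∈ P.bounded :=
    fun A hA => KL (Cf A) Aᶜ (hCll A hA)
  choose! Pa hPa1 hPa2 hPa3 using hKL'
  haveI : Fintype {A // A ∈ U} := FinsetCoe.fintype U
  set atom : ({A // A ∈ U} → Bool) → Set X :=
    fun f => ⋂ i : {A // A ∈ U}, (if f i then Pa i.1 else (Pa i.1)ᶜ) with hatomdef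
  set W : Finset (Set X) := Finset.image atom Finset.univ with hWdef
  have hmemW : ∀ Z ∈ W, ∃ f, atom f = Z := by
    intro Z hZ
    obtain ⟨f, _, hf⟩ := Finset.mem_image.mp hZ
    exact ⟨f, hf⟩
  have hdiff : ∀ (f g : {A // A ∈ U} → Bool), atom f ≠ atom g →
      ∃ i : {A // A ∈ U},
        (atom f ⊆ Pa i.1 ∧ atom g ⊆ (Pa i.1)ᶜ) ∨ (atom f ⊆ (Pa i.1)ᶜ ∧ atom g ⊆ Pa i.1) := by
    intro f g hne
    have hfg : f ≠ g := fun h => hne (by rw [h])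
    obtain ⟨i, hi⟩ := Function.ne_iff.mp hfg
    refine ⟨i, ?_⟩
    have hsubf : ∀ (h : {A // A ∈ U} → Bool), atom h ⊆ (if h i then Pa i.1 else (Pa i.1)ᶜ) :=
      fun h x hx => Set.mem_iInter.mp hx i
    cases hfi : f i
    · cases hgi : g i
      · exact absurd (hfi.trans hgi.symm) hi
      · refine Or.inr ⟨?_, ?_⟩
        · have := hsubf f; rwa [hfi, if_neg (by simp)] at this
        · have := hsubf g; rwa [hgi, if_pos (by simp)] at this
    · cases hgi : g i
      · refine Or.inl ⟨?_, ?_⟩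
        · have := hsubf f; rwa [hfi, if_pos (by simp)] at this
        · have := hsubf g; rwa [hgi, if_neg (by simp)] at this
      · exact absurd (hfi.trans hgi.symm) hi
  have hpre : PreGood P W := by
    refine ⟨?_, ?_, ?_⟩
    · apply Set.eq_univ_of_univ_subset
      intro x _
      set f : {A // A ∈ U} → Bool := fun i => decide (x ∈ Pa i.1) with hfdef
      refine Set.mem_biUnion (Finset.mem_image.mpr ⟨f, Finset.mem_univ f, rfl⟩) ?_
      refine Set.mem_iInter.mpr fun i => ?_
      by_cases hx : x ∈ Pa i.1
      · simp [hfdef, hx]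
      · simp [hfdef, hx]
    · intro Z hZ Z' hZ' hne
      obtain ⟨f, rfl⟩ := hmemW Z hZ
      obtain ⟨g, rfl⟩ := hmemW Z' hZ'
      obtain ⟨i, hi | hi⟩ := hdiff f g hne
      · apply Set.eq_empty_of_subset_empty
        intro x hx
        exact hi.2 hx.2 (hi.1 hx.1)
      · apply Set.eq_empty_of_subset_empty
        intro x hx
        exact hi.1 hx.1 (hi.2 hx.2)
    · intro Z hZ Z' hZ' hne
      obtain ⟨f, rfl⟩ := hmemW Z hZ
      obtain ⟨g, rfl⟩ := hmemW Z' hZ'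
      obtain ⟨i, hi | hi⟩ := hdiff f g hne
      · intro h
        exact hPa1 i.1 i.2 (close_mono P h hi.1 hi.2)
      · intro h
        exact hPa1 i.1 i.2 (close_mono P (P.symm _ _ h) hi.2 hi.1)
  obtain ⟨H, hH, hHW⟩ := preGood_to_good P hpre
  refine ⟨H, hH, ?_⟩
  intro Z hZ hZunb
  obtain ⟨f, rfl⟩ := hmemW Z (hHW Z hZ hZunb)
  have hsubf : ∀ i : {A // A ∈ U}, f i = true → atom f ⊆ Pa i.1 := by
    intro i hi x hx
    have := Set.mem_iInter.mp hx i
    rwa [hi, if_pos (by simp)] at this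
  have hsubf' : ∀ i : {A // A ∈ U}, f i = false → atom f ⊆ (Pa i.1)ᶜ := by
    intro i hi x hx
    have := Set.mem_iInter.mp hx i
    rwa [hi, if_neg (by simp)] at this
  have hex_true : ∃ i, f i = true := by
    by_contra h
    push_neg at h
    have hempty : atom f = ∅ := by
      apply Set.eq_empty_of_subset_empty
      intro x hx
      have hxu : x ∈ (⋃ A ∈ U, Cf A) := by rw [hCcov]; trivial
      obtain ⟨A, hA, hxA⟩ : ∃ A ∈ U, x ∈ Cf A := by simpa using hxu
      have hxP : x ∈ Pa A := hPa2 A hA hxA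
      have hfi : f ⟨A, hA⟩ = false := by
        cases hfi : f ⟨A, hA⟩
        · rfl
        · exact absurd hfi (h _)
      exact hsubf' ⟨A, hA⟩ hfi hx hxP
    rw [hempty] at hZunb
    exact hZunb P.empty_mem
  have hex_good : ∃ i : {A // A ∈ U}, f i = true ∧ i.1 ∉ P.bounded := by
    by_contra h
    push_neg at h
    obtain ⟨i₀, hi₀⟩ := hex_true
    have hbAi : i₀.1 ∈ P.bounded := h i₀ hi₀
    have hsub2 : atom f ⊆ i₀.1 ∪ (i₀.1ᶜ ∩ Pa i₀.1) := by
      intro x hx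
      have hxP : x ∈ Pa i₀.1 := hsubf i₀ hi₀ hx
      by_cases hxA : x ∈ i₀.1
      · exact Or.inl hxA
      · exact Or.inr ⟨hxA, hxP⟩
    exact hZunb (P.subset_mem _ (P.union_mem _ hbAi _ (hPa3 i₀.1 i₀.2)) _ hsub2)
  obtain ⟨i, hitrue, hiunb⟩ := hex_good
  refine ⟨i.1, i.2, hiunb, i.1ᶜ ∩ Pa i.1, hPa3 i.1 i.2, ?_⟩
  rintro x ⟨hx1, hx2⟩
  have hxP : x ∈ Pa i.1 := hsubf i hitrue hx1
  by_contra hxA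
  exact hx2 ⟨hxA, hxP⟩

end MainRefine
/-- If `X` is an unbounded proper metric space with `d(x,y) ≥ 1` for `x ≠ y`, equipped with
its metric coarse proximity structure, and `asdim(X) = 0`, then `Δ_c(X) = 0`: `X` admits a
fine directed system of coarsely canonical covers each of order at most `1`. -/
theorem coarseCofinal_zero_of_asdim_zero {X : Type u} [MetricSpace X] [ProperSpace X]
    (hunb : ¬ Bornology.IsBounded (Set.univ : Set X))
    (hdiscrete : ∀ x y : X, x ≠ y → 1 ≤ dist x y)
    (P : CoarseProximity X)
    (hbornology : ∀ A : Set X, A ∈ P.bounded ↔ Bornology.IsBounded A)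
    (hclose : ∀ A C : Set X, P.close A C ↔ MetricCoarseClose A C)
    (hasdim : AsdimLE P 0) :
    ∃ (Ω : Type) (_ : Preorder Ω) (F : Ω → Finset (Set X)),
      IsFineDirectedSystem P F ∧ ∀ α : Ω, CCCoverOrderLE P (F α) 1 := by
  classical
  have hTop : Set.univ ∉ P.bounded := fun h => hunb ((hbornology _).mp h)
  have hmain := main_refine P hbornology hclose hasdim
  have hXne : Nonempty X := by
    by_contra h
    rw [not_nonempty_iff] at h
    refine hunb ?_
    have huniv : (Set.univ : Set X) = ∅ := Set.univ_eq_empty_iff.mpr h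
    rw [huniv]
    exact Bornology.isBounded_empty
  obtain ⟨x₀⟩ := hXne
  have hballfin : ∀ r : ℝ, (Metric.closedBall x₀ r).Finite := by
    intro r
    have hcomp : IsCompact (Metric.closedBall x₀ r) := isCompact_closedBall x₀ r
    have hcover : Metric.closedBall x₀ r ⊆
        ⋃ x ∈ Metric.closedBall x₀ r, Metric.ball x (1/2 : ℝ) := fun x hx =>
      Set.mem_biUnion hx (Metric.mem_ball_self (by norm_num))
    obtain ⟨t, hts, htfin, htsub⟩ := hcomp.elim_finite_subcover_image
      (fun x _ => Metric.isOpen_ball) hcover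
    have hsingle : ∀ x y : X, y ∈ Metric.ball x (1/2 : ℝ) → y = x := by
      intro x y hy
      by_contra hne
      have h1 := hdiscrete y x hne
      rw [Metric.mem_ball] at hy
      linarith
    refine Set.Finite.subset htfin ?_
    intro x hx
    obtain ⟨y, hy, hxy⟩ : ∃ y ∈ t, x ∈ Metric.ball y (1/2 : ℝ) := by
      simpa using htsub hx
    rw [hsingle y x hxy]
    exact hy
  have hcount : Countable X := by
    rw [← Set.countable_univ_iff]
    have huniv : (Set.univ : Set X) = ⋃ n : ℕ, Metric.closedBall x₀ (n : ℝ) := by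
      apply Set.eq_of_subset_of_subset
      · intro x _
        obtain ⟨n, hn⟩ := exists_nat_ge (dist x x₀)
        exact Set.mem_iUnion.mpr ⟨n, Metric.mem_closedBall.mpr hn⟩
      · exact fun x _ => trivial
    rw [huniv]
    exact Set.countable_iUnion fun n => (hballfin n).countable
  obtain ⟨e, he⟩ : ∃ e : ℕ → X, Function.Surjective e := by
    haveI : Nonempty X := ⟨x₀⟩
    exact exists_surjective_nat X
  set dec : (ℕ → Bool) → Set X := fun p => {x | ∃ n, p n = true ∧ e n = x} with hdecdef
  have hdecsurj : ∀ S : Set X, ∃ p, dec p = S := by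
    intro S
    refine ⟨fun n => decide (e n ∈ S), ?_⟩
    ext x
    simp only [hdecdef, Set.mem_setOf_eq, decide_eq_true_eq]
    constructor
    · rintro ⟨n, hn, rfl⟩; exact hn
    · intro hx
      obtain ⟨n, rfl⟩ := he x
      exact ⟨n, hx, rfl⟩
  choose code hcode using hdecsurj
  set decF : List (ℕ → Bool) → Finset (Set X) := fun l => (l.map dec).toFinset with hdecFdef
  have hdecFsurj : ∀ H : Finset (Set X), ∃ l, decF l = H := by
    intro H
    refine ⟨H.toList.map code, ?_⟩
    rw [hdecFdef]
    simp only [List.map_map]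
    have hmapeq : H.toList.map (dec ∘ code) = H.toList.map id := by
      apply List.map_congr_left
      intro S _
      exact hcode S
    rw [hmapeq, List.map_id, Finset.toList_toFinset]
  refine ⟨{l : List (ℕ → Bool) // GoodPart P (decF l)},
    { le := fun a b => CoarselyRefines P (decF b.1) (decF a.1)
      lt := fun a b => CoarselyRefines P (decF b.1) (decF a.1) ∧
        ¬ CoarselyRefines P (decF a.1) (decF b.1)
      le_refl := fun a => coarselyRefines_refl P _
      le_trans := fun a b c h1 h2 => coarselyRefines_trans P h1 h2
      lt_iff_le_not_ge := fun a b => Iff.rfl },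
    fun a => decF a.1, ⟨?_, ?_, ?_, ?_, ?_⟩, ?_⟩
  · obtain ⟨l, hl⟩ := hdecFsurj {Set.univ}
    exact ⟨⟨l, by rw [hl]; exact goodPart_univ P⟩⟩
  · intro α β
    obtain ⟨H, hH, h1, h2⟩ := goodPart_common_refinement P α.2 β.2
    obtain ⟨l, hl⟩ := hdecFsurj H
    refine ⟨⟨l, by rw [hl]; exact hH⟩, ?_, ?_⟩
    · show CoarselyRefines P (decF l) (decF α.1)
      rw [hl]; exact h1
    · show CoarselyRefines P (decF l) (decF β.1)
      rw [hl]; exact h2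
  · exact fun α => goodPart_ccc P α.2
  · exact fun α β h => h
  · intro U hU
    obtain ⟨H, hH, href⟩ := hmain U hU
    obtain ⟨l, hl⟩ := hdecFsurj H
    refine ⟨⟨l, by rw [hl]; exact hH⟩, ?_⟩
    show CoarselyRefines P (decF l) U
    rw [hl]; exact href
  · exact fun α => goodPart_order P hTop α.2
end

section
/- Let (X,B,b) be a coarse proximity space. Then the following are equivalent: (1) (X,B,b) is metrizable, i.e. there is a metric d on X such that B is exactly the family of d-bounded sets and b is the metric coarse proximity induced by d; (2) B is countably generated and b is witnessed by a countable family of uniformly bounded covers. -/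
universe u v w

/-- The bornology of a coarse proximity space is countably generated. -/
def CountablyGeneratedBornology {X : Type u} (P : CoarseProximity X) : Prop :=
  ∃ B : ℕ → Set X, (∀ n, B n ∈ P.bounded) ∧ ∀ A ∈ P.bounded, ∃ n, A ⊆ B n

/-- A countable family of uniformly bounded covers witnesses the coarse proximity. -/
def WitnessedBy {X : Type u} (P : CoarseProximity X) (V : ℕ → Set (Set X)) : Prop :=
  ∀ A C : Set X, P.close A C → ∃ n, starOf A (V n) ∩ C ∉ P.bounded

/-- `d` is a metric on `X`. -/
def IsMetricFn {X : Type u} (d : X → X → ℝ) : Prop :=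
  (∀ x y, 0 ≤ d x y) ∧ (∀ x y, d x y = 0 ↔ x = y) ∧ (∀ x y, d x y = d y x) ∧
  (∀ x y z, d x z ≤ d x y + d y z)

/-- A set is bounded with respect to the metric `d`. -/
def MetricBoundedFn {X : Type u} (d : X → X → ℝ) (A : Set X) : Prop :=
  ∃ r : ℝ, ∀ x ∈ A, ∀ y ∈ A, d x y ≤ r

/-- The metric coarse proximity relation induced by the metric `d`. -/
def MetricCoarseCloseFn {X : Type u} (d : X → X → ℝ) (A C : Set X) : Prop :=
  ∃ ε : ℝ, ∀ D : Set X, MetricBoundedFn d D →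
    ∃ a ∈ A \ D, ∃ c ∈ C \ D, d a c < ε

section AuxLemmas

variable {X : Type u}

namespace CPAux

lemma mem_starOf {A : Set X} {U : Set (Set X)} {x : X} :
    x ∈ starOf A U ↔ ∃ B, B ∈ U ∧ x ∈ B ∧ (B ∩ A).Nonempty := by
  constructor
  · rintro ⟨B, ⟨hBU, hBA⟩, hxB⟩
    exact ⟨B, hBU, hxB, hBA⟩
  · rintro ⟨B, hBU, hxB, hBA⟩
    exact ⟨B, ⟨hBU, hBA⟩, hxB⟩

lemma starOf_mono {A A' : Set X} {U : Set (Set X)} (h : A ⊆ A') :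
    starOf A U ⊆ starOf A' U := by
  intro x hx
  rcases mem_starOf.mp hx with ⟨B, hBU, hxB, c, hcB, hcA⟩
  exact mem_starOf.mpr ⟨B, hBU, hxB, c, hcB, h hcA⟩

lemma starOf_union (A : Set X) (U W : Set (Set X)) :
    starOf A (U ∪ W) = starOf A U ∪ starOf A W := by
  apply Set.Subset.antisymm
  · rintro x hx
    rcases mem_starOf.mp hx with ⟨B, hBU | hBW, hxB, hne⟩
    · exact Or.inl (mem_starOf.mpr ⟨B, hBU, hxB, hne⟩)
    · exact Or.inr (mem_starOf.mpr ⟨B, hBW, hxB, hne⟩)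
  · rintro x (hx | hx)
    · rcases mem_starOf.mp hx with ⟨B, hB, hxB, hne⟩
      exact mem_starOf.mpr ⟨B, Or.inl hB, hxB, hne⟩
    · rcases mem_starOf.mp hx with ⟨B, hB, hxB, hne⟩
      exact mem_starOf.mpr ⟨B, Or.inr hB, hxB, hne⟩

variable {P : CoarseProximity X}

lemma close_mono_left {A A' C : Set X} (h : P.close A C) (hsub : A ⊆ A') : P.close A' C := by
  have h2 := (P.union_close_iff A A' C).mpr (Or.inl h)
  rwa [Set.union_eq_self_of_subset_left hsub] at h2

lemma close_mono_right {A C C' : Set X} (h : P.close A C) (hsub : C ⊆ C') : P.close A C' :=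
  P.symm _ _ (close_mono_left (P.symm _ _ h) hsub)

lemma close_union_right_iff {A C D : Set X} :
    P.close A (C ∪ D) ↔ P.close A C ∨ P.close A D := by
  constructor
  · intro h
    rcases (P.union_close_iff C D A).mp (P.symm _ _ h) with h' | h'
    · exact Or.inl (P.symm _ _ h')
    · exact Or.inr (P.symm _ _ h')
  · rintro (h | h)
    · exact close_mono_right h Set.subset_union_left
    · exact close_mono_right h Set.subset_union_right

lemma unbounded_union {A C : Set X} (h : A ∪ C ∉ P.bounded) :
    A ∉ P.bounded ∨ C ∉ P.bounded := by
  by_contra hc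
  push_neg at hc
  exact h (P.union_mem A hc.1 C hc.2)

/-- If `C` lies in the star of `A` w.r.t. a uniformly bounded family and is unbounded,
then `A` is close to `C`. -/
lemma close_of_subset_star {Z : Set (Set X)} (hZ : IsUnifBoundedFamily P Z)
    {A C : Set X} (hC : C ⊆ starOf A Z) (hCu : C ∉ P.bounded) : P.close A C := by
  set A₀ := A ∩ starOf C Z with hA₀
  have h1 : A₀ ⊆ starOf C Z := Set.inter_subset_right
  have h2 : C ⊆ starOf A₀ Z := by
    intro c hc
    rcases mem_starOf.mp (hC hc) with ⟨B, hBZ, hcB, a, haB, haA⟩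
    have haSt : a ∈ starOf C Z := mem_starOf.mpr ⟨B, hBZ, haB, c, hcB, hc⟩
    exact mem_starOf.mpr ⟨B, hBZ, hcB, a, haB, ⟨haA, haSt⟩⟩
  have hphi := hZ.2 A₀ C h1 h2
  exact close_mono_left (hphi.1 C (Set.Subset.refl C) hCu) Set.inter_subset_left

/-- Stars of bounded sets w.r.t. uniformly bounded families are bounded. -/
lemma star_bounded {Z : Set (Set X)} (hZ : IsUnifBoundedFamily P Z)
    {C : Set X} (hC : C ∈ P.bounded) : starOf C Z ∈ P.bounded := by
  by_contra hS
  set S := starOf C Z with hSdef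
  set C₀ := C ∩ S with hC₀
  have hSC₀ : S ⊆ starOf C₀ Z := by
    intro x hx
    rcases mem_starOf.mp hx with ⟨B, hBZ, hxB, c, hcB, hcC⟩
    have hcS : c ∈ S := mem_starOf.mpr ⟨B, hBZ, hcB, c, hcB, hcC⟩
    exact mem_starOf.mpr ⟨B, hBZ, hxB, c, hcB, hcC, hcS⟩
  have hC₀S : C₀ ⊆ starOf S Z := by
    intro c hc
    rcases mem_starOf.mp hc.2 with ⟨B, hBZ, hcB, hne⟩
    exact mem_starOf.mpr ⟨B, hBZ, hcB, c, hcB, hc.2⟩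
  have hphi := hZ.2 S C₀ hSC₀ hC₀S
  have hcl := hphi.2 S (Set.Subset.refl S) hS
  exact (P.unbounded_right _ _ hcl) (P.subset_mem C hC C₀ Set.inter_subset_left)

/-- Closeness to a star implies closeness to the set. -/
lemma close_of_close_star {Z : Set (Set X)} (hZ : IsUnifBoundedFamily P Z)
    {A C : Set X} (h : P.close A (starOf C Z)) : P.close A C := by
  by_contra hAC
  rcases P.strong A C hAC with ⟨E, hAE, hEC⟩
  set S := starOf C Z with hSdef
  have hsplit : S = (S ∩ E) ∪ (S ∩ Eᶜ) := by
    rw [← Set.inter_union_distrib_left, Set.union_compl_self, Set.inter_univ]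
  rw [hsplit] at h
  rcases close_union_right_iff.mp h with h1 | h2
  · exact hAE (close_mono_right h1 Set.inter_subset_right)
  · have hunb : S ∩ Eᶜ ∉ P.bounded := P.unbounded_right _ _ h2
    have hcl : P.close C (S ∩ Eᶜ) := close_of_subset_star hZ Set.inter_subset_left hunb
    exact hEC (P.symm _ _ (close_mono_right hcl Set.inter_subset_right))

lemma ubf_union {U W : Set (Set X)} (hU : IsUnifBoundedFamily P U)
    (hW : IsUnifBoundedFamily P W) : IsUnifBoundedFamily P (U ∪ W) := by
  constructor
  · rintro B (hB | hB)
    exacts [hU.1 B hB, hW.1 B hB]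
  · intro A C hA hC
    rw [starOf_union] at hA hC
    constructor
    · intro C' hsub hunb
      have hsplit : (C' ∩ starOf A U) ∪ (C' ∩ starOf A W) = C' := by
        rw [← Set.inter_union_distrib_left]
        exact Set.inter_eq_self_of_subset_left (fun c hc => hC (hsub hc))
      rcases unbounded_union (hsplit ▸ hunb) with h | h
      · exact close_mono_right (close_of_subset_star hU Set.inter_subset_right h)
          Set.inter_subset_left
      · exact close_mono_right (close_of_subset_star hW Set.inter_subset_right h)
          Set.inter_subset_left
    · intro A' hsub hunb
      have hsplit : (A' ∩ starOf C U) ∪ (A' ∩ starOf C W) = A' := by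
        rw [← Set.inter_union_distrib_left]
        exact Set.inter_eq_self_of_subset_left (fun a ha => hA (hsub ha))
      rcases unbounded_union (hsplit ▸ hunb) with h | h
      · exact close_mono_left
          (P.symm _ _ (close_of_subset_star hU Set.inter_subset_right h))
          Set.inter_subset_left
      · exact close_mono_left
          (P.symm _ _ (close_of_subset_star hW Set.inter_subset_right h))
          Set.inter_subset_left

lemma ubf_singleton {D : Set X} (hD : D ∈ P.bounded) :
    IsUnifBoundedFamily P ({D} : Set (Set X)) := by
  constructor
  · rintro B hB
    rw [Set.mem_singleton_iff] at hB
    exact hB ▸ hD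
  · intro A C hA hC
    have hstD : ∀ E : Set X, starOf E ({D} : Set (Set X)) ⊆ D := by
      intro E x hx
      rcases mem_starOf.mp hx with ⟨B, hB, hxB, _⟩
      rw [Set.mem_singleton_iff] at hB
      exact hB ▸ hxB
    have hAb : A ∈ P.bounded := P.subset_mem D hD A (hA.trans (hstD C))
    have hCb : C ∈ P.bounded := P.subset_mem D hD C (hC.trans (hstD A))
    constructor
    · intro C' hsub hunb
      exact absurd (P.subset_mem C hCb C' hsub) hunb
    · intro A' hsub hunb
      exact absurd (P.subset_mem A hAb A' hsub) hunb

end CPAux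

end AuxLemmas
section Construction

variable {X : Type u}

namespace CPAux

def BB (B : ℕ → Set X) : ℕ → Set X
  | 0 => B 0
  | n + 1 => BB B n ∪ B (n + 1)

def Zf (B : ℕ → Set X) (V : ℕ → Set (Set X)) : ℕ → Set (Set X)
  | 0 => V 0 ∪ {BB B 0}
  | n + 1 => Zf B V n ∪ (V (n + 1) ∪ {BB B (n + 1)})

def Erel (B : ℕ → Set X) (V : ℕ → Set (Set X)) (N : ℕ) (x y : X) : Prop :=
  ∃ S ∈ Zf B V N, x ∈ S ∧ y ∈ S

open scoped Classical in
noncomputable def Wt (B : ℕ → Set X) (V : ℕ → Set (Set X)) (x y : X) : ℕ :=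
  if x = y then 0 else 2 ^ sInf {N | Erel B V N x y}

noncomputable def cost (B : ℕ → Set X) (V : ℕ → Set (Set X)) : X → X → List X → ℕ
  | x, y, [] => Wt B V x y
  | x, y, z :: l => Wt B V x z + cost B V z y l

noncomputable def Dn (B : ℕ → Set X) (V : ℕ → Set (Set X)) (x y : X) : ℕ :=
  sInf (Set.range (cost B V x y))

def iterSt (Z : Set (Set X)) : ℕ → Set X → Set X
  | 0, S => S
  | k + 1, S => iterSt Z k S ∪ starOf (iterSt Z k S) Z

variable {P : CoarseProximity X} {B : ℕ → Set X} {V : ℕ → Set (Set X)}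

lemma BB_bounded (hB : ∀ n, B n ∈ P.bounded) : ∀ n, BB B n ∈ P.bounded := by
  intro n
  induction n with
  | zero => exact hB 0
  | succ n ih => exact P.union_mem _ ih _ (hB (n + 1))

lemma B_subset_BB (B : ℕ → Set X) (n : ℕ) : B n ⊆ BB B n := by
  cases n with
  | zero => exact Set.Subset.refl _
  | succ n => exact Set.subset_union_right

lemma BB_mem_Zf (B : ℕ → Set X) (V : ℕ → Set (Set X)) (n : ℕ) : BB B n ∈ Zf B V n := by
  cases n with
  | zero => exact Or.inr rfl
  | succ n => exact Or.inr (Or.inr rfl)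

lemma V_subset_Zf (B : ℕ → Set X) (V : ℕ → Set (Set X)) (n : ℕ) : V n ⊆ Zf B V n := by
  cases n with
  | zero => exact Set.subset_union_left
  | succ n => exact fun S hS => Or.inr (Or.inl hS)

lemma Zf_mono (B : ℕ → Set X) (V : ℕ → Set (Set X)) {n m : ℕ} (h : n ≤ m) :
    Zf B V n ⊆ Zf B V m := by
  induction m with
  | zero => rw [Nat.le_zero.mp h]
  | succ m ih =>
    rcases Nat.lt_or_ge n (m + 1) with h' | h'
    · exact (ih (Nat.lt_succ_iff.mp h')).trans Set.subset_union_left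
    · rw [Nat.le_antisymm h h']

lemma Zf_ubf (hV : ∀ n, IsUnifBoundedFamily P (V n)) (hB : ∀ n, B n ∈ P.bounded) :
    ∀ n, IsUnifBoundedFamily P (Zf B V n) := by
  intro n
  induction n with
  | zero => exact ubf_union (hV 0) (ubf_singleton (BB_bounded hB 0))
  | succ n ih =>
    exact ubf_union ih (ubf_union (hV (n + 1)) (ubf_singleton (BB_bounded hB (n + 1))))

lemma Erel_symm {N : ℕ} {x y : X} (h : Erel B V N x y) : Erel B V N y x := by
  rcases h with ⟨S, hS, hx, hy⟩
  exact ⟨S, hS, hy, hx⟩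

lemma Erel_mono {N M : ℕ} (h : N ≤ M) {x y : X} (hE : Erel B V N x y) : Erel B V M x y := by
  rcases hE with ⟨S, hS, hx, hy⟩
  exact ⟨S, Zf_mono B V h hS, hx, hy⟩

lemma Erel_total (P : CoarseProximity X) (hB : ∀ A ∈ P.bounded, ∃ n, A ⊆ B n)
    (x y : X) : ∃ N, Erel B V N x y := by
  have hxy : ({x, y} : Set X) ∈ P.bounded := by
    have h := P.union_mem {x} (P.singleton_mem x) {y} (P.singleton_mem y)
    rwa [Set.singleton_union] at h
  rcases hB _ hxy with ⟨n, hn⟩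
  refine ⟨n, BB B n, BB_mem_Zf B V n, ?_, ?_⟩
  · exact B_subset_BB B n (hn (by simp))
  · exact B_subset_BB B n (hn (by simp))

lemma Wt_self (x : X) : Wt B V x x = 0 := if_pos rfl

lemma Wt_symm (x y : X) : Wt B V x y = Wt B V y x := by
  by_cases h : x = y
  · subst h; rfl
  · rw [Wt, Wt, if_neg h, if_neg (Ne.symm h)]
    congr 2
    ext N
    exact ⟨Erel_symm, Erel_symm⟩

lemma Wt_pos {x y : X} (h : x ≠ y) : 1 ≤ Wt B V x y := by
  rw [Wt, if_neg h]
  exact Nat.one_le_two_pow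

lemma Wt_le_of_Erel {N : ℕ} {x y : X} (h : Erel B V N x y) : Wt B V x y ≤ 2 ^ N := by
  by_cases hxy : x = y
  · rw [Wt, if_pos hxy]; exact Nat.zero_le _
  · rw [Wt, if_neg hxy]
    exact Nat.pow_le_pow_right (by norm_num) (Nat.sInf_le h)

lemma Erel_of_Wt_le (htot : ∀ x y : X, ∃ N, Erel B V N x y) {M : ℕ} {x y : X}
    (hxy : x ≠ y) (h : Wt B V x y ≤ 2 ^ M) : Erel B V M x y := by
  rw [Wt, if_neg hxy] at h
  have hne : {N | Erel B V N x y}.Nonempty := htot x y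
  have hmem := Nat.sInf_mem hne
  have hle : sInf {N | Erel B V N x y} ≤ M :=
    (Nat.pow_le_pow_iff_right (by norm_num : 1 < 2)).mp h
  exact Erel_mono hle hmem

lemma cost_append (l₂ : List X) (y z : X) :
    ∀ (l₁ : List X) (x : X),
      cost B V x z (l₁ ++ y :: l₂) = cost B V x y l₁ + cost B V y z l₂ := by
  intro l₁
  induction l₁ with
  | nil => intro x; simp [cost]
  | cons w l ih => intro x; simp [cost, ih, Nat.add_assoc]

lemma cost_reverse : ∀ (l : List X) (x y : X), cost B V x y l = cost B V y x l.reverse := by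
  intro l
  induction l with
  | nil => intro x y; exact Wt_symm x y
  | cons z l ih =>
    intro x y
    have h1 : cost B V y x ((z :: l).reverse) = cost B V y z l.reverse + cost B V z x [] := by
      rw [List.reverse_cons, cost_append]
    rw [h1]
    show Wt B V x z + cost B V z y l = _
    rw [ih z y]
    show _ = cost B V y z l.reverse + Wt B V z x
    rw [Wt_symm x z, Nat.add_comm]

lemma cost_eq_zero : ∀ (l : List X) (x y : X), cost B V x y l = 0 → x = y := by
  intro l
  induction l with
  | nil =>
    intro x y h
    have h' : Wt B V x y = 0 := h
    by_contra hxy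
    have := Wt_pos (B := B) (V := V) hxy
    omega
  | cons z l ih =>
    intro x y h
    have h' : Wt B V x z + cost B V z y l = 0 := h
    have hxz : x = z := by
      by_contra hxz
      have := Wt_pos (B := B) (V := V) hxz
      omega
    exact hxz.trans (ih z y (by omega))

lemma Dn_le_cost (x y : X) (l : List X) : Dn B V x y ≤ cost B V x y l :=
  Nat.sInf_le ⟨l, rfl⟩

lemma Dn_exists (x y : X) : ∃ l : List X, cost B V x y l = Dn B V x y := by
  have hne : (Set.range (cost B V x y)).Nonempty := ⟨cost B V x y [], [], rfl⟩
  exact Nat.sInf_mem hne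

lemma Dn_self (x : X) : Dn B V x x = 0 := by
  have h := Dn_le_cost (B := B) (V := V) x x []
  have h2 : cost B V x x [] = 0 := Wt_self x
  omega

lemma Dn_eq_zero {x y : X} (h : Dn B V x y = 0) : x = y := by
  rcases Dn_exists (B := B) (V := V) x y with ⟨l, hl⟩
  rw [h] at hl
  exact cost_eq_zero l x y hl

lemma Dn_symm (x y : X) : Dn B V x y = Dn B V y x := by
  have key : ∀ a b : X, Dn B V a b ≤ Dn B V b a := by
    intro a b
    rcases Dn_exists (B := B) (V := V) b a with ⟨l, hl⟩
    have := Dn_le_cost (B := B) (V := V) a b l.reverse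
    rw [← cost_reverse] at this
    omega
  exact Nat.le_antisymm (key x y) (key y x)

lemma Dn_triangle (x y z : X) : Dn B V x z ≤ Dn B V x y + Dn B V y z := by
  rcases Dn_exists (B := B) (V := V) x y with ⟨l₁, h₁⟩
  rcases Dn_exists (B := B) (V := V) y z with ⟨l₂, h₂⟩
  have := Dn_le_cost (B := B) (V := V) x z (l₁ ++ y :: l₂)
  rw [cost_append] at this
  omega

lemma Dn_le_of_Erel {N : ℕ} {x y : X} (h : Erel B V N x y) : Dn B V x y ≤ 2 ^ N := by
  have h1 := Dn_le_cost (B := B) (V := V) x y []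
  have h2 : cost B V x y [] = Wt B V x y := rfl
  have h3 := Wt_le_of_Erel h
  omega

lemma subset_iterSt (Z : Set (Set X)) (k : ℕ) (S : Set X) : S ⊆ iterSt Z k S := by
  induction k with
  | zero => exact Set.Subset.refl _
  | succ k ih => exact ih.trans Set.subset_union_left

lemma iterSt_mono_k (Z : Set (Set X)) {k m : ℕ} (h : k ≤ m) (S : Set X) :
    iterSt Z k S ⊆ iterSt Z m S := by
  induction m with
  | zero => rw [Nat.le_zero.mp h]
  | succ m ih =>
    rcases Nat.lt_or_ge k (m + 1) with h' | h'
    · exact (ih (Nat.lt_succ_iff.mp h')).trans Set.subset_union_left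
    · rw [Nat.le_antisymm h h']

lemma iterSt_mono (Z : Set (Set X)) (k : ℕ) {S T : Set X} (h : S ⊆ T) :
    iterSt Z k S ⊆ iterSt Z k T := by
  induction k with
  | zero => exact h
  | succ k ih => exact Set.union_subset_union ih (starOf_mono ih)

lemma iterSt_add (Z : Set (Set X)) (b : ℕ) (S : Set X) :
    ∀ a : ℕ, iterSt Z a (iterSt Z b S) = iterSt Z (a + b) S := by
  intro a
  induction a with
  | zero => rw [Nat.zero_add]; rfl
  | succ a ih =>
    show iterSt Z a (iterSt Z b S) ∪ starOf (iterSt Z a (iterSt Z b S)) Z = _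
    rw [ih, show a + 1 + b = (a + b) + 1 from by omega]
    rfl

lemma iterSt_bounded {Z : Set (Set X)} (hZ : IsUnifBoundedFamily P Z)
    {S : Set X} (hS : S ∈ P.bounded) (k : ℕ) : iterSt Z k S ∈ P.bounded := by
  induction k with
  | zero => exact hS
  | succ k ih => exact P.union_mem _ ih _ (star_bounded hZ ih)

lemma mem_iter_of_cost (htot : ∀ x y : X, ∃ N, Erel B V N x y) {M : ℕ} :
    ∀ (l : List X) (x y : X) (m : ℕ), m ≤ M → cost B V x y l ≤ m →
      y ∈ iterSt (Zf B V M) m ({x} : Set X) := by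
  intro l
  induction l with
  | nil =>
    intro x y m hmM hc
    by_cases hxy : x = y
    · subst hxy
      exact subset_iterSt _ _ _ rfl
    · have h1 : 1 ≤ Wt B V x y := Wt_pos hxy
      have hcw : Wt B V x y ≤ m := hc
      have hE : Erel B V M x y :=
        Erel_of_Wt_le htot hxy
          (le_trans hcw (le_trans hmM (Nat.le_of_lt (Nat.lt_two_pow_self (n := M)))))
      rcases hE with ⟨S, hS, hxS, hyS⟩
      have hy1 : y ∈ iterSt (Zf B V M) 1 ({x} : Set X) :=
        Or.inr (mem_starOf.mpr ⟨S, hS, hyS, x, hxS, rfl⟩)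
      exact iterSt_mono_k _ (by omega) _ hy1
  | cons z l ih =>
    intro x y m hmM hc
    have hc' : Wt B V x z + cost B V z y l ≤ m := hc
    by_cases hxz : x = z
    · subst hxz
      exact ih x y m hmM (by have := Wt_self (B := B) (V := V) x; omega)
    · have h1 : 1 ≤ Wt B V x z := Wt_pos hxz
      have hE : Erel B V M x z :=
        Erel_of_Wt_le htot hxz
          (le_trans (by omega) (le_trans hmM (Nat.le_of_lt (Nat.lt_two_pow_self (n := M)))))
      rcases hE with ⟨S, hS, hxS, hzS⟩
      have hz1 : z ∈ iterSt (Zf B V M) 1 ({x} : Set X) :=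
        Or.inr (mem_starOf.mpr ⟨S, hS, hzS, x, hxS, rfl⟩)
      have hyz : y ∈ iterSt (Zf B V M) (m - 1) ({z} : Set X) :=
        ih z y (m - 1) (by omega) (by omega)
      have hsub : iterSt (Zf B V M) (m - 1) ({z} : Set X) ⊆
          iterSt (Zf B V M) (m - 1) (iterSt (Zf B V M) 1 ({x} : Set X)) :=
        iterSt_mono _ _ (Set.singleton_subset_iff.mpr hz1)
      have hadd := iterSt_add (Zf B V M) 1 ({x} : Set X) (m - 1)
      rw [hadd] at hsub
      have hm : m - 1 + 1 = m := by omega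
      rw [hm] at hsub
      exact hsub hyz

lemma close_of_close_iter {Z : Set (Set X)} (hZ : IsUnifBoundedFamily P Z) :
    ∀ (k : ℕ) {A S : Set X}, P.close S (iterSt Z k A) → P.close S A := by
  intro k
  induction k with
  | zero => intro A S h; exact h
  | succ k ih =>
    intro A S h
    rcases close_union_right_iff.mp h with h1 | h2
    · exact ih h1
    · exact ih (close_of_close_star hZ h2)

lemma close_of_subset_iter {Z : Set (Set X)} (hZ : IsUnifBoundedFamily P Z)
    {A T : Set X} {k : ℕ} (hT : T ⊆ iterSt Z k A) (hTu : T ∉ P.bounded) : P.close A T := by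
  have h1 : P.close (iterSt Z k A) T :=
    P.inter_close _ _ (by rwa [Set.inter_eq_self_of_subset_right hT])
  exact P.symm _ _ (close_of_close_iter hZ k (P.symm _ _ h1))

end CPAux

end Construction
section ForwardHelpers

variable {X : Type u}

namespace CPAux

lemma mccf_symm {d : X → X → ℝ} (hd : ∀ x y, d x y = d y x) {A C : Set X}
    (h : MetricCoarseCloseFn d A C) : MetricCoarseCloseFn d C A := by
  rcases h with ⟨ε, hε⟩
  refine ⟨ε, fun D hD => ?_⟩
  rcases hε D hD with ⟨a, ha, c, hc, hlt⟩
  exact ⟨c, hc, a, ha, by rwa [hd c a]⟩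

lemma mccf_of_near {P : CoarseProximity X} {d : X → X → ℝ} (hmet : IsMetricFn d)
    (hbd : ∀ A : Set X, A ∈ P.bounded ↔ MetricBoundedFn d A)
    {A C : Set X} {n : ℝ} (hn : 0 ≤ n)
    (hnear : ∀ a ∈ A, ∃ c ∈ C, d a c ≤ n) (hA : A ∉ P.bounded) :
    MetricCoarseCloseFn d A C := by
  obtain ⟨hpos, heq, hsymm, htri⟩ := hmet
  refine ⟨n + 1, fun D hD => ?_⟩
  rcases hD with ⟨r, hr⟩
  set D' : Set X := {x | ∃ y ∈ D, d x y ≤ n} with hD'def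
  have hDD' : D ⊆ D' := by
    intro x hx
    refine ⟨x, hx, ?_⟩
    rw [show d x x = 0 from (heq x x).mpr rfl]
    exact hn
  have hD'b : MetricBoundedFn d D' := by
    refine ⟨n + r + n, ?_⟩
    rintro x ⟨y, hyD, hxy⟩ x' ⟨y', hy'D, hx'y'⟩
    have t1 := htri x y x'
    have t2 := htri y y' x'
    have t3 := hr y hyD y' hy'D
    have t4 := hsymm y' x'
    linarith
  have hnsub : ¬ A ⊆ D' := by
    intro hsub
    rcases hD'b with ⟨r', hr'⟩
    exact hA ((hbd A).mpr ⟨r', fun x hx y hy => hr' x (hsub hx) y (hsub hy)⟩)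
  rcases Set.not_subset.mp hnsub with ⟨a, haA, haD'⟩
  rcases hnear a haA with ⟨c, hcC, hac⟩
  refine ⟨a, ⟨haA, fun haD => haD' (hDD' haD)⟩, c, ⟨hcC, ?_⟩, by linarith⟩
  intro hcD
  exact haD' ⟨c, hcD, hac⟩

end CPAux

end ForwardHelpers
/-- A coarse proximity space is metrizable if and only if its bornology is countably
generated and its coarse proximity is witnessed by a countable family of uniformly
bounded covers. -/
theorem metrizability_criterion {X : Type u} (P : CoarseProximity X) :
    (∃ d : X → X → ℝ, IsMetricFn d ∧
        (∀ A : Set X, A ∈ P.bounded ↔ MetricBoundedFn d A) ∧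
        (∀ A C : Set X, P.close A C ↔ MetricCoarseCloseFn d A C)) ↔
    (CountablyGeneratedBornology P ∧
      ∃ V : ℕ → Set (Set X), (∀ n, IsUnifBoundedCover P (V n)) ∧ WitnessedBy P V) := by
  constructor
  · rintro ⟨d, hmet, hbd, hcl⟩
    obtain ⟨hpos, heq, hsymm, htri⟩ := hmet
    constructor
    · -- countably generated bornology
      by_cases hX : Nonempty X
      · obtain ⟨x₀⟩ := hX
        refine ⟨fun n => {x | d x₀ x ≤ n}, fun n => ?_, fun A hA => ?_⟩
        · refine (hbd _).mpr ⟨(n : ℝ) + n, fun x hx y hy => ?_⟩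
          have t1 := htri x x₀ y
          have t2 := hsymm x x₀
          have hx' : d x₀ x ≤ n := hx
          have hy' : d x₀ y ≤ n := hy
          linarith
        · rcases (hbd A).mp hA with ⟨r, hr⟩
          rcases A.eq_empty_or_nonempty with rfl | ⟨a, ha⟩
          · exact ⟨0, Set.empty_subset _⟩
          · obtain ⟨n, hn⟩ := exists_nat_ge (d x₀ a + r)
            refine ⟨n, fun x hx => ?_⟩
            have h1 := htri x₀ a x
            have h2 := hr a ha x hx
            show d x₀ x ≤ n
            linarith
      · exact ⟨fun _ => ∅, fun _ => P.empty_mem,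
          fun A _ => ⟨0, fun x hx => absurd ⟨x⟩ hX⟩⟩
    · -- witnessing family of uniformly bounded covers
      refine ⟨fun n => {S : Set X | ∀ x ∈ S, ∀ y ∈ S, d x y ≤ n}, fun n => ⟨⟨?_, ?_⟩, ?_⟩, ?_⟩
      · intro S hS
        exact (hbd S).mpr ⟨n, hS⟩
      · intro A C hA hC
        constructor
        · intro C' hsub hunb
          have hnear : ∀ c ∈ C', ∃ a ∈ A, d c a ≤ (n : ℝ) := by
            intro c hc
            rcases CPAux.mem_starOf.mp (hC (hsub hc)) with ⟨S, hS, hcS, a, haS, haA⟩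
            exact ⟨a, haA, hS c hcS a haS⟩
          have h := CPAux.mccf_of_near ⟨hpos, heq, hsymm, htri⟩ hbd (Nat.cast_nonneg n)
            hnear hunb
          exact (hcl A C').mpr (CPAux.mccf_symm hsymm h)
        · intro A' hsub hunb
          have hnear : ∀ a ∈ A', ∃ c ∈ C, d a c ≤ (n : ℝ) := by
            intro a ha
            rcases CPAux.mem_starOf.mp (hA (hsub ha)) with ⟨S, hS, haS, c, hcS, hcC⟩
            exact ⟨c, hcC, hS a haS c hcS⟩
          exact (hcl A' C).mpr
            (CPAux.mccf_of_near ⟨hpos, heq, hsymm, htri⟩ hbd (Nat.cast_nonneg n) hnear hunb)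
      · rw [Set.eq_univ_iff_forall]
        intro x
        refine Set.mem_sUnion.mpr ⟨{x}, ?_, rfl⟩
        intro a ha b hb
        rw [Set.mem_singleton_iff] at ha hb
        rw [ha, hb, (heq x x).mpr rfl]
        exact Nat.cast_nonneg n
      · intro A C hclose
        rcases (hcl A C).mp hclose with ⟨ε, hε⟩
        obtain ⟨n, hn⟩ := exists_nat_ge ε
        refine ⟨n, fun hb => ?_⟩
        rcases hε _ ((hbd _).mp hb) with ⟨a, ⟨haA, haT⟩, c, ⟨hcC, hcT⟩, hlt⟩
        apply hcT
        refine ⟨CPAux.mem_starOf.mpr ⟨{a, c}, ?_, Or.inr rfl, a, Or.inl rfl, haA⟩, hcC⟩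
        have hac : d a c ≤ (n : ℝ) := le_trans hlt.le hn
        have hca : d c a ≤ (n : ℝ) := by rw [hsymm c a]; exact hac
        have hself : ∀ w : X, d w w ≤ (n : ℝ) := fun w => by
          rw [(heq w w).mpr rfl]; exact Nat.cast_nonneg n
        intro x hx y hy
        simp only [Set.mem_insert_iff, Set.mem_singleton_iff] at hx hy
        rcases hx with rfl | rfl <;> rcases hy with rfl | rfl
        · exact hself _
        · exact hac
        · exact hca
        · exact hself _
  · rintro ⟨⟨B, hBmem, hBgen⟩, V, hVub, hVwit⟩
    have hVfam : ∀ n, IsUnifBoundedFamily P (V n) := fun n => (hVub n).1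
    have htot : ∀ x y : X, ∃ N, CPAux.Erel B V N x y := CPAux.Erel_total P hBgen
    have hZubf : ∀ n, IsUnifBoundedFamily P (CPAux.Zf B V n) := CPAux.Zf_ubf hVfam hBmem
    have hmet : IsMetricFn (fun x y : X => (CPAux.Dn B V x y : ℝ)) := by
      refine ⟨fun x y => Nat.cast_nonneg _, fun x y => ?_, fun x y => ?_, fun x y z => ?_⟩
      · constructor
        · intro h
          exact CPAux.Dn_eq_zero (Nat.cast_eq_zero.mp h)
        · rintro rfl
          show ((CPAux.Dn B V x x : ℕ) : ℝ) = 0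
          rw [CPAux.Dn_self]
          norm_num
      · show ((CPAux.Dn B V x y : ℕ) : ℝ) = ((CPAux.Dn B V y x : ℕ) : ℝ)
        rw [CPAux.Dn_symm]
      · show ((CPAux.Dn B V x z : ℕ) : ℝ) ≤
          ((CPAux.Dn B V x y : ℕ) : ℝ) + ((CPAux.Dn B V y z : ℕ) : ℝ)
        exact_mod_cast CPAux.Dn_triangle (B := B) (V := V) x y z
    have hbdd : ∀ A : Set X,
        A ∈ P.bounded ↔ MetricBoundedFn (fun x y : X => (CPAux.Dn B V x y : ℝ)) A := by
      intro A
      constructor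
      · intro hA
        rcases hBgen A hA with ⟨m, hm⟩
        refine ⟨((2 ^ m : ℕ) : ℝ), fun x hx y hy => ?_⟩
        have hE : CPAux.Erel B V m x y :=
          ⟨CPAux.BB B m, CPAux.BB_mem_Zf B V m, CPAux.B_subset_BB B m (hm hx),
            CPAux.B_subset_BB B m (hm hy)⟩
        show ((CPAux.Dn B V x y : ℕ) : ℝ) ≤ _
        exact_mod_cast CPAux.Dn_le_of_Erel hE
      · rintro ⟨r, hr⟩
        rcases A.eq_empty_or_nonempty with rfl | ⟨a, ha⟩
        · exact P.empty_mem
        · obtain ⟨M, hM⟩ := exists_nat_ge r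
          have hsub : A ⊆ CPAux.iterSt (CPAux.Zf B V M) M ({a} : Set X) := by
            intro x hx
            have h1 : ((CPAux.Dn B V a x : ℕ) : ℝ) ≤ M := le_trans (hr a ha x hx) hM
            have h2 : CPAux.Dn B V a x ≤ M := by exact_mod_cast h1
            rcases CPAux.Dn_exists (B := B) (V := V) a x with ⟨l, hl⟩
            exact CPAux.mem_iter_of_cost htot l a x M le_rfl (by omega)
          exact P.subset_mem _ (CPAux.iterSt_bounded (hZubf M) (P.singleton_mem a) M) A hsub
    refine ⟨fun x y => (CPAux.Dn B V x y : ℝ), hmet, hbdd, fun A C => ⟨?_, ?_⟩⟩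
    · intro h
      rcases hVwit A C h with ⟨n, hT⟩
      refine ⟨((2 ^ n : ℕ) : ℝ) + 1, fun D hD => ?_⟩
      have hDb : D ∈ P.bounded := (hbdd D).mpr hD
      have hD'b : D ∪ starOf D (CPAux.Zf B V n) ∈ P.bounded :=
        P.union_mem _ hDb _ (CPAux.star_bounded (hZubf n) hDb)
      have hnsub : ¬ (starOf A (V n) ∩ C) ⊆ (D ∪ starOf D (CPAux.Zf B V n)) := by
        intro hsub
        exact hT (P.subset_mem _ hD'b _ hsub)
      rcases Set.not_subset.mp hnsub with ⟨c, ⟨hcst, hcC⟩, hcD'⟩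
      rcases CPAux.mem_starOf.mp hcst with ⟨S, hS, hcS, a, haS, haA⟩
      have haD : a ∉ D := by
        intro haD
        exact hcD' (Or.inr (CPAux.mem_starOf.mpr
          ⟨S, CPAux.V_subset_Zf B V n hS, hcS, a, haS, haD⟩))
      have hE : CPAux.Erel B V n a c := ⟨S, CPAux.V_subset_Zf B V n hS, haS, hcS⟩
      have hle : ((CPAux.Dn B V a c : ℕ) : ℝ) ≤ ((2 ^ n : ℕ) : ℝ) := by
        exact_mod_cast CPAux.Dn_le_of_Erel hE
      refine ⟨a, ⟨haA, haD⟩, c, ⟨hcC, fun hc => hcD' (Or.inl hc)⟩, ?_⟩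
      show ((CPAux.Dn B V a c : ℕ) : ℝ) < _
      linarith
    · rintro ⟨ε, hε⟩
      obtain ⟨M, hM⟩ := exists_nat_ge ε
      have hTu : {c ∈ C | ∃ a ∈ A, CPAux.Dn B V a c ≤ M} ∉ P.bounded := by
        intro hb
        rcases hε _ ((hbdd _).mp hb) with ⟨a, ⟨haA, _⟩, c, ⟨hcC, hcT⟩, hlt⟩
        apply hcT
        refine ⟨hcC, a, haA, ?_⟩
        have hlt' : ((CPAux.Dn B V a c : ℕ) : ℝ) < M := lt_of_lt_of_le hlt hM
        exact_mod_cast hlt'.le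
      have hsub : {c ∈ C | ∃ a ∈ A, CPAux.Dn B V a c ≤ M} ⊆
          CPAux.iterSt (CPAux.Zf B V M) M A := by
        rintro c ⟨hcC, a, haA, hDn⟩
        rcases CPAux.Dn_exists (B := B) (V := V) a c with ⟨l, hl⟩
        have h1 : c ∈ CPAux.iterSt (CPAux.Zf B V M) M ({a} : Set X) :=
          CPAux.mem_iter_of_cost htot l a c M le_rfl (by omega)
        exact CPAux.iterSt_mono _ _ (Set.singleton_subset_iff.mpr haA) h1
      have hclT : P.close A {c ∈ C | ∃ a ∈ A, CPAux.Dn B V a c ≤ M} :=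
        CPAux.close_of_subset_iter (hZubf M) hsub hTu
      exact CPAux.close_mono_right hclT (fun c hc => hc.1)
end

section
/- Let Ω be a directed set and {(X_α,B_α,b_α), f_{βα}} an inverse system of coarse proximity spaces over Ω with set-theoretic inverse limit Z and projections π_α. Then the family B = {B ⊆ Z : there exists α ∈ Ω with π_α(B) ∈ B_α} is a bornology on Z. -/
universe u v w

/-- A coarse proximity map between coarse proximity spaces. -/
def IsCoarseProxMap {X : Type u} {Y : Type v} (P : CoarseProximity X) (Q : CoarseProximity Y)
    (f : X → Y) : Prop :=
  (∀ B ∈ P.bounded, f '' B ∈ Q.bounded) ∧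
  ∀ A C : Set X, P.close A C → Q.close (f '' A) (f '' C)

/-- A family of subsets is a bornology: it contains the empty set and all singletons,
and is closed under subsets and finite unions. -/
def IsBornologyOn {X : Type u} (B : Set (Set X)) : Prop :=
  ∅ ∈ B ∧
  (∀ x : X, {x} ∈ B) ∧
  (∀ A ∈ B, ∀ C : Set X, C ⊆ A → C ∈ B) ∧
  (∀ A ∈ B, ∀ C ∈ B, A ∪ C ∈ B)

/-- The set-theoretic inverse limit (set of threads) of an inverse system. -/
abbrev Thread {Ω : Type u} [Preorder Ω] (Xs : Ω → Type v)
    (f : ∀ α β : Ω, α ≤ β → Xs β → Xs α) : Type (max u v) :=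
  {x : ∀ α, Xs α // ∀ (α β : Ω) (h : α ≤ β), f α β h (x β) = x α}

/-- The family `{B ⊆ Z : ∃ α, π_α(B) ∈ B_α}` is a bornology on the set-theoretic inverse
limit `Z` of an inverse system of coarse proximity spaces. -/
theorem invlim_bornology {Ω : Type u} [Preorder Ω] [Nonempty Ω]
    (hdir : ∀ α β : Ω, ∃ γ : Ω, α ≤ γ ∧ β ≤ γ)
    (Xs : Ω → Type v) (Ps : ∀ α, CoarseProximity (Xs α))
    (f : ∀ α β : Ω, α ≤ β → Xs β → Xs α)
    (hmap : ∀ (α β : Ω) (h : α ≤ β), IsCoarseProxMap (Ps β) (Ps α) (f α β h))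
    (hcomp : ∀ (α β γ : Ω) (h1 : α ≤ β) (h2 : β ≤ γ) (x : Xs γ),
      f α β h1 (f β γ h2 x) = f α γ (le_trans h1 h2) x) :
    IsBornologyOn
      {B : Set (Thread Xs f) |
        ∃ α : Ω, (fun z : Thread Xs f => z.val α) '' B ∈ (Ps α).bounded} := by
  obtain ⟨α₀⟩ := ‹Nonempty Ω›
  have key : ∀ (A : Set (Thread Xs f)) (α γ : Ω) (h : α ≤ γ),
      (fun z : Thread Xs f => z.val α) '' A ∈ (Ps α).bounded →
      (fun z : Thread Xs f => z.val γ) '' A ∈ (Ps γ).bounded := by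
    intro A α γ h hb
    by_contra hub
    have hclose : (Ps γ).close ((fun z : Thread Xs f => z.val γ) '' A)
        ((fun z : Thread Xs f => z.val γ) '' A) := by
      apply (Ps γ).inter_close
      simpa [Set.inter_self] using hub
    have hcl := (hmap α γ h).2 _ _ hclose
    have himg : f α γ h '' ((fun z : Thread Xs f => z.val γ) '' A)
        = (fun z : Thread Xs f => z.val α) '' A := by
      ext x
      simp only [Set.mem_image]
      constructor
      · rintro ⟨y, ⟨z, hz, rfl⟩, rfl⟩
        exact ⟨z, hz, (z.property α γ h).symm⟩
      · rintro ⟨z, hz, rfl⟩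
        exact ⟨z.val γ, ⟨z, hz, rfl⟩, z.property α γ h⟩
    rw [himg] at hcl
    exact (Ps α).unbounded_left _ _ hcl hb
  refine ⟨⟨α₀, ?_⟩, ?_, ?_, ?_⟩
  · simpa using (Ps α₀).empty_mem
  · intro z
    exact ⟨α₀, by simpa using (Ps α₀).singleton_mem (z.val α₀)⟩
  · rintro A ⟨α, hA⟩ C hCA
    exact ⟨α, (Ps α).subset_mem _ hA _ (Set.image_mono hCA)⟩
  · rintro A ⟨α, hA⟩ C ⟨β, hC⟩
    obtain ⟨γ, hαγ, hβγ⟩ := hdir α β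
    refine ⟨γ, ?_⟩
    rw [Set.image_union]
    exact (Ps γ).union_mem _ (key A α γ hαγ hA) _ (key C β γ hβγ hC)
end

section
/- Let (X,d) be a metric space equipped with its metric coarse proximity structure. A collection U of subsets of X is uniformly bounded in the metric sense (i.e. sup_{B∈U} diam(B) < ∞) if and only if U is a uniformly bounded family with respect to the metric coarse proximity structure. Consequently, U is a uniformly bounded cover of X in the metric sense if and only if it is a uniformly bounded cover in the coarse proximity sense. -/
universe u v w

section Helpers

variable {X : Type u}

private lemma myNotCloseLeft [MetricSpace X] {A C : Set X}
    (hA : Bornology.IsBounded A) : ¬ MetricCoarseClose A C := by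
  rintro ⟨ε, h⟩
  obtain ⟨a, ⟨haA, haD⟩, -⟩ := h A hA
  exact haD haA

private lemma myCloseSymm [MetricSpace X] {A C : Set X}
    (h : MetricCoarseClose A C) : MetricCoarseClose C A := by
  obtain ⟨ε, h⟩ := h
  refine ⟨ε, fun D hD => ?_⟩
  obtain ⟨a, ha, c, hc, hd⟩ := h D hD
  exact ⟨c, hc, a, ha, by rwa [dist_comm]⟩

private lemma myMemStarOf {U : Set (Set X)} {B A : Set X} {z : X}
    (hBU : B ∈ U) (hz : z ∈ B) (hBA : (B ∩ A).Nonempty) : z ∈ starOf A U :=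
  ⟨B, ⟨hBU, hBA⟩, hz⟩

private lemma myCloseOfStar [MetricSpace X] {U : Set (Set X)} {ρ : ℝ} (hρ : 0 ≤ ρ)
    (hr : ∀ B ∈ U, ∀ x ∈ B, ∀ y ∈ B, dist x y ≤ ρ)
    {S T : Set X} (hT : T ⊆ starOf S U) (hTu : ¬ Bornology.IsBounded T) :
    MetricCoarseClose S T := by
  refine ⟨ρ + 1, fun D hD => ?_⟩
  have hD' : Bornology.IsBounded (D ∪ Metric.cthickening ρ D) := hD.union hD.cthickening
  obtain ⟨t, htT, htD'⟩ := Set.not_subset.1 (fun hsub => hTu (hD'.subset hsub))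
  obtain ⟨B, ⟨hBU, s, hsB, hsS⟩, htB⟩ := hT htT
  have hts : dist t s ≤ ρ := hr B hBU t htB s hsB
  refine ⟨s, ⟨hsS, fun hsD => htD' (Or.inr
      (Metric.mem_cthickening_of_dist_le t s ρ D hsD hts))⟩,
    t, ⟨htT, fun h => htD' (Or.inl h)⟩, ?_⟩
  calc dist s t = dist t s := dist_comm _ _
    _ ≤ ρ := hts
    _ < ρ + 1 := by linarith

private lemma myAuxContra [MetricSpace X]
    (P : CoarseProximity X)
    (hb : ∀ A : Set X, A ∈ P.bounded ↔ Bornology.IsBounded A)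
    (hc : ∀ A C : Set X, P.close A C ↔ MetricCoarseClose A C)
    {U : Set (Set X)} (hU : IsUnifBoundedFamily P U)
    {A C : Set X} (hAst : A ⊆ starOf C U) (hCst : C ⊆ starOf A U)
    (hA : Bornology.IsBounded A) (hC : ¬ Bornology.IsBounded C) : False := by
  have hphi := hU.2 A C hAst hCst
  have hcl := hphi.1 C subset_rfl (fun h => hC ((hb C).1 h))
  exact myNotCloseLeft hA ((hc A C).1 hcl)

private noncomputable def mySeq (f : ℕ → ℕ → ℕ) (k0 : ℕ) : ℕ → ℕ
  | 0 => k0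
  | j + 1 => f j (mySeq f k0 j)

private lemma myDivergingPairs [MetricSpace X] (p : X)
    (x y : ℕ → X) (hd : ∀ n : ℕ, (n : ℝ) < dist (x n) (y n))
    (hfar : ∀ M : ℝ, ∃ N : ℕ, ∀ n ≥ N, M < dist p (x n) ∧ M < dist p (y n)) :
    ∃ k : ℕ → ℕ,
      ¬ Bornology.IsBounded (Set.range fun j => y (k j)) ∧
      ¬ MetricCoarseClose (Set.range fun j => x (k j)) (Set.range fun j => y (k j)) := by
  choose N hN using hfar
  set f : ℕ → ℕ → ℕ := fun j kj =>
    max (kj + 1) (N (max (dist p (x kj)) (dist p (y kj)) + 2 * ((j : ℝ) + 2))) with hf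
  set k : ℕ → ℕ := mySeq f (N 2) with hk
  set m : ℕ → ℝ := fun j => max (dist p (x (k j))) (dist p (y (k j))) with hm
  have hk0 : k 0 = N 2 := rfl
  have hkS : ∀ j, k (j + 1) = max (k j + 1) (N (m j + 2 * ((j : ℝ) + 2))) := fun j => rfl
  have h0 : 2 < dist p (x (k 0)) ∧ 2 < dist p (y (k 0)) := hN 2 (k 0) (le_of_eq hk0.symm)
  have hS : ∀ j, m j + 2 * ((j : ℝ) + 2) < dist p (x (k (j + 1))) ∧
      m j + 2 * ((j : ℝ) + 2) < dist p (y (k (j + 1))) := by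
    intro j
    exact hN _ _ (le_trans (le_max_right _ _) (le_of_eq (hkS j).symm))
  have hm0 : ∀ j, 0 ≤ m j := fun j => le_trans dist_nonneg (le_max_left _ _)
  have hkmono : StrictMono k := by
    apply strictMono_nat_of_lt_succ
    intro j
    have : k j + 1 ≤ k (j + 1) := le_trans (le_max_left _ _) (le_of_eq (hkS j).symm)
    omega
  have hmS : ∀ j, m j < m (j + 1) := by
    intro j
    have h1 := (hS j).1
    have h2 : dist p (x (k (j + 1))) ≤ m (j + 1) := le_max_left _ _
    have hj : (0:ℝ) ≤ (j : ℝ) := Nat.cast_nonneg j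
    linarith
  have hmmono : Monotone m := monotone_nat_of_le_succ (fun j => (hmS j).le)
  have hlow : ∀ j : ℕ, (j : ℝ) < dist p (x (k j)) ∧ (j : ℝ) < dist p (y (k j)) := by
    intro j
    cases j with
    | zero =>
      refine ⟨?_, ?_⟩
      · have := h0.1; push_cast; linarith
      · have := h0.2; push_cast; linarith
    | succ j =>
      have h1 := (hS j).1
      have h2 := (hS j).2
      have h3 := hm0 j
      constructor <;> · push_cast; linarith
  refine ⟨k, ?_, ?_⟩
  · intro hb
    obtain ⟨R, hsub⟩ := hb.subset_closedBall p
    have hmem : y (k ⌈R⌉₊) ∈ Metric.closedBall p R := hsub ⟨⌈R⌉₊, rfl⟩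
    rw [Metric.mem_closedBall] at hmem
    have h1 := (hlow ⌈R⌉₊).2
    have h2 : R ≤ (⌈R⌉₊ : ℝ) := Nat.le_ceil R
    rw [dist_comm] at hmem
    linarith
  · rintro ⟨ε, h⟩
    set j₀ : ℕ := ⌈ε⌉₊ with hj₀
    obtain ⟨a, ⟨haR, haD⟩, c, ⟨hcR, hcD⟩, hac⟩ :=
      h (Metric.closedBall p (m j₀)) Metric.isBounded_closedBall
    obtain ⟨i, rfl⟩ := haR
    obtain ⟨j, rfl⟩ := hcR
    have hεj : ε ≤ (j₀ : ℝ) := Nat.le_ceil ε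
    have hiD : ¬ dist (x (k i)) p ≤ m j₀ := fun h' => haD (Metric.mem_closedBall.2 h')
    have hjD : ¬ dist (y (k j)) p ≤ m j₀ := fun h' => hcD (Metric.mem_closedBall.2 h')
    have hi : j₀ < i := by
      by_contra h'
      exact hiD (by rw [dist_comm]; exact le_trans (le_max_left _ _) (hmmono (not_lt.1 h')))
    have hj : j₀ < j := by
      by_contra h'
      exact hjD (by rw [dist_comm]; exact le_trans (le_max_right _ _) (hmmono (not_lt.1 h')))
    rcases lt_trichotomy i j with hij | rfl | hij
    · obtain ⟨j', rfl⟩ : ∃ j', j = j' + 1 := ⟨j - 1, by omega⟩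
      have h1 := (hS j').2
      have h2 : dist p (x (k i)) ≤ m j' :=
        le_trans (le_max_left _ _) (hmmono (by omega : i ≤ j'))
      have htri := dist_triangle p (x (k i)) (y (k (j' + 1)))
      have hjj : (j₀ : ℝ) < (j' : ℝ) + 1 := by exact_mod_cast hj
      linarith
    · have h1 := hd (k i)
      have h2 : (i : ℝ) ≤ (k i : ℝ) := by exact_mod_cast hkmono.le_apply
      have h3 : (j₀ : ℝ) < (i : ℝ) := by exact_mod_cast hi
      linarith
    · obtain ⟨i', rfl⟩ : ∃ i', i = i' + 1 := ⟨i - 1, by omega⟩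
      have h1 := (hS i').1
      have h2 : dist p (y (k j)) ≤ m i' :=
        le_trans (le_max_right _ _) (hmmono (by omega : j ≤ i'))
      have htri := dist_triangle p (y (k j)) (x (k (i' + 1)))
      have hd' : dist (y (k j)) (x (k (i' + 1))) = dist (x (k (i' + 1))) (y (k j)) :=
        dist_comm _ _
      have hii : (j₀ : ℝ) < (i' : ℝ) + 1 := by exact_mod_cast hi
      linarith

end Helpers

/-- A collection of subsets of a metric space is uniformly bounded in the metric sense if
and only if it is a uniformly bounded family with respect to the metric coarse proximity
structure; consequently the same equivalence holds for uniformly bounded covers. -/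
theorem metric_unifBounded_iff {X : Type u} [MetricSpace X]
    (P : CoarseProximity X)
    (hbornology : ∀ A : Set X, A ∈ P.bounded ↔ Bornology.IsBounded A)
    (hclose : ∀ A C : Set X, P.close A C ↔ MetricCoarseClose A C)
    (U : Set (Set X)) :
    ((∃ r : ℝ, ∀ B ∈ U, ∀ x ∈ B, ∀ y ∈ B, dist x y ≤ r) ↔ IsUnifBoundedFamily P U) ∧
    (((∃ r : ℝ, ∀ B ∈ U, ∀ x ∈ B, ∀ y ∈ B, dist x y ≤ r) ∧ ⋃₀ U = Set.univ) ↔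
      IsUnifBoundedCover P U) :=  by
  have main : (∃ r : ℝ, ∀ B ∈ U, ∀ x ∈ B, ∀ y ∈ B, dist x y ≤ r) ↔
      IsUnifBoundedFamily P U := by
    constructor
    · rintro ⟨r, hr⟩
      have hρ0 : (0:ℝ) ≤ max r 0 := le_max_right r 0
      have hrρ : ∀ B ∈ U, ∀ x ∈ B, ∀ y ∈ B, dist x y ≤ max r 0 :=
        fun B hB x hx y hy => le_trans (hr B hB x hx y hy) (le_max_left _ _)
      constructor
      · intro B hB
        exact (hbornology B).2 (Metric.isBounded_iff.2
          ⟨max r 0, fun x hx y hy => hrρ B hB x hx y hy⟩)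
      · intro A C hA hC
        constructor
        · intro C' hC'C hC'b
          exact (hclose _ _).2 (myCloseOfStar hρ0 hrρ (hC'C.trans hC)
            (fun hb => hC'b ((hbornology _).2 hb)))
        · intro A' hA'A hA'b
          exact (hclose _ _).2 (myCloseSymm (myCloseOfStar hρ0 hrρ (hA'A.trans hA)
            (fun hb => hA'b ((hbornology _).2 hb))))
    · intro hU
      by_contra hcon
      push_neg at hcon
      choose B hBU x hx y hy hd using fun n : ℕ => hcon (n : ℝ)
      set p := x 0 with hp
      by_cases Hx : ∀ M : ℝ, {n : ℕ | dist p (x n) ≤ M}.Finite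
      · by_cases Hy : ∀ M : ℝ, {n : ℕ | dist p (y n) ≤ M}.Finite
        · -- case 3 : both coordinates escape to infinity
          have hfar : ∀ M : ℝ, ∃ N : ℕ, ∀ n ≥ N,
              M < dist p (x n) ∧ M < dist p (y n) := by
            intro M
            have hF : ({n : ℕ | dist p (x n) ≤ M} ∪ {n : ℕ | dist p (y n) ≤ M}).Finite :=
              (Hx M).union (Hy M)
            obtain ⟨b, hb⟩ := hF.bddAbove
            refine ⟨b + 1, fun n hn => ?_⟩
            have hnotin : n ∉ {n : ℕ | dist p (x n) ≤ M} ∪ {n : ℕ | dist p (y n) ≤ M} := by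
              intro hmem
              have := hb hmem
              omega
            rw [Set.mem_union, Set.mem_setOf_eq, Set.mem_setOf_eq] at hnotin
            push_neg at hnotin
            exact hnotin
          obtain ⟨k, hCu, hnc⟩ := myDivergingPairs p x y hd hfar
          have hAst : (Set.range fun j => x (k j)) ⊆ starOf (Set.range fun j => y (k j)) U := by
            rintro _ ⟨j, rfl⟩
            exact myMemStarOf (hBU (k j)) (hx (k j)) ⟨y (k j), hy (k j), ⟨j, rfl⟩⟩
          have hCst : (Set.range fun j => y (k j)) ⊆ starOf (Set.range fun j => x (k j)) U := by
            rintro _ ⟨j, rfl⟩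
            exact myMemStarOf (hBU (k j)) (hy (k j)) ⟨x (k j), hx (k j), ⟨j, rfl⟩⟩
          have hphi := hU.2 _ _ hAst hCst
          have hcl := hphi.1 _ subset_rfl (fun h => hCu ((hbornology _).1 h))
          exact hnc ((hclose _ _).1 hcl)
        · -- case 2 : y has a bounded infinite subsequence
          push_neg at Hy
          obtain ⟨M, hM⟩ := Hy
          set S := {n : ℕ | dist p (y n) ≤ M} with hSdef
          have hCb : Bornology.IsBounded (y '' S) := by
            refine (Metric.isBounded_closedBall (x := p) (r := M)).subset ?_
            rintro _ ⟨n, hn, rfl⟩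
            rw [Metric.mem_closedBall, dist_comm]
            exact hn
          have hAu : ¬ Bornology.IsBounded (x '' S) := by
            intro hb
            obtain ⟨R, hsub⟩ := hb.subset_closedBall p
            obtain ⟨n, hnS, hn⟩ := hM.exists_gt ⌈M + R⌉₊
            have h1 : dist (x n) p ≤ R := hsub ⟨n, hnS, rfl⟩
            have h2 : dist p (y n) ≤ M := hnS
            have h3 := hd n
            have htri := dist_triangle (x n) p (y n)
            have h4 : M + R ≤ (⌈M + R⌉₊ : ℝ) := Nat.le_ceil _
            have h5 : ((⌈M + R⌉₊ : ℕ) : ℝ) < (n : ℝ) := by exact_mod_cast hn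
            linarith
          have hAst : (y '' S) ⊆ starOf (x '' S) U := by
            rintro _ ⟨n, hn, rfl⟩
            exact myMemStarOf (hBU n) (hy n) ⟨x n, hx n, ⟨n, hn, rfl⟩⟩
          have hCst : (x '' S) ⊆ starOf (y '' S) U := by
            rintro _ ⟨n, hn, rfl⟩
            exact myMemStarOf (hBU n) (hx n) ⟨y n, hy n, ⟨n, hn, rfl⟩⟩
          exact myAuxContra P hbornology hclose hU hAst hCst hCb hAu
      · -- case 1 : x has a bounded infinite subsequence
        push_neg at Hx
        obtain ⟨M, hM⟩ := Hx
        set S := {n : ℕ | dist p (x n) ≤ M} with hSdef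
        have hAb : Bornology.IsBounded (x '' S) := by
          refine (Metric.isBounded_closedBall (x := p) (r := M)).subset ?_
          rintro _ ⟨n, hn, rfl⟩
          rw [Metric.mem_closedBall, dist_comm]
          exact hn
        have hCu : ¬ Bornology.IsBounded (y '' S) := by
          intro hb
          obtain ⟨R, hsub⟩ := hb.subset_closedBall p
          obtain ⟨n, hnS, hn⟩ := hM.exists_gt ⌈M + R⌉₊
          have h1 : dist (y n) p ≤ R := hsub ⟨n, hnS, rfl⟩
          have h2 : dist p (x n) ≤ M := hnS
          have h3 := hd n
          have htri := dist_triangle (x n) p (y n)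
          have h4 : M + R ≤ (⌈M + R⌉₊ : ℝ) := Nat.le_ceil _
          have h5 : ((⌈M + R⌉₊ : ℕ) : ℝ) < (n : ℝ) := by exact_mod_cast hn
          have h6 : dist p (y n) = dist (y n) p := dist_comm _ _
          have h7 : dist (x n) p = dist p (x n) := dist_comm _ _
          linarith
        have hAst : (x '' S) ⊆ starOf (y '' S) U := by
          rintro _ ⟨n, hn, rfl⟩
          exact myMemStarOf (hBU n) (hx n) ⟨y n, hy n, ⟨n, hn, rfl⟩⟩
        have hCst : (y '' S) ⊆ starOf (x '' S) U := by
          rintro _ ⟨n, hn, rfl⟩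
          exact myMemStarOf (hBU n) (hy n) ⟨x n, hx n, ⟨n, hn, rfl⟩⟩
        exact myAuxContra P hbornology hclose hU hAst hCst hAb hCu
  exact ⟨main, and_congr main Iff.rfl⟩
end

section
/- If U and V are uniformly bounded covers of a coarse proximity space (X,B,b), then st(U,V) := {st(U,V) : U ∈ U} is a uniformly bounded cover of X. -/
universe u v w

/-!
φ-equivalent sets are close to the same sets (split a partner along the set `E` given by the
strong axiom), so φ is transitive. As every set is φ-equivalent to its star in a uniformly
bounded cover, `D` is φ-equivalent to `st(st(st(D, V), U), V)`, which contains `st(D, st(U, V))`. So if `A ⊆ st(C, st(U, V))` and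
`C ⊆ st(A, st(U, V))`, then `A` is close to every unbounded subset of `C` and vice versa,
which is `A φ C`. A star `st(A, V)` of a bounded `A` is bounded, being φ-equivalent to `A`.
-/

namespace CoarseProximity

variable {X : Type u} (P : CoarseProximity X) {A B C D : Set X}

lemma close_mono_left (hAB : A ⊆ B) (h : P.close A D) : P.close B D := by
  simpa [Set.union_eq_self_of_subset_left hAB] using (P.union_close_iff A B D).2 (Or.inl h)

lemma close_mono_right (hCD : C ⊆ D) (h : P.close A C) : P.close A D :=
  P.symm _ _ (P.close_mono_left hCD (P.symm _ _ h))

variable {P}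

lemma phi.symm (h : P.phi A B) : P.phi B A :=
  ⟨fun B' hB' hu => P.symm _ _ (h.2 B' hB' hu), fun A' hA' hu => P.symm _ _ (h.1 A' hA' hu)⟩

lemma phi.close_of_close (hAB : P.phi A B) (hBD : P.close B D) : P.close A D := by
  by_contra hAD
  obtain ⟨E, hAE, hED⟩ := P.strong A D hAD
  have hsplit : P.close (B ∩ E) D ∨ P.close (B ∩ Eᶜ) D :=
    (P.union_close_iff _ _ D).1 (by rwa [Set.inter_union_compl])
  rcases hsplit with hBE | hBE
  · exact hAE (P.close_mono_right Set.inter_subset_right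
      (hAB.1 _ Set.inter_subset_left (P.unbounded_left _ _ hBE)))
  · exact hED (P.close_mono_left Set.inter_subset_right hBE)

lemma phi.trans (hAB : P.phi A B) (hBC : P.phi B C) : P.phi A C :=
  ⟨fun C' hC' hu => hAB.close_of_close (hBC.1 C' hC' hu),
    fun A' hA' hu => P.symm _ _ (hBC.symm.close_of_close (P.symm _ _ (hAB.2 A' hA' hu)))⟩

lemma phi.mem_bounded (hAB : P.phi A B) (hA : A ∈ P.bounded) : B ∈ P.bounded := by
  by_contra hB
  exact P.unbounded_left _ _ (hAB.1 B subset_rfl hB) hA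

lemma phi_of_subset_of_subset {E F : Set X} (hAE : P.phi A E) (hCE : C ⊆ E)
    (hCF : P.phi C F) (hAF : A ⊆ F) : P.phi A C :=
  ⟨fun C' hC' hu => hAE.1 C' (hC'.trans hCE) hu,
    fun A' hA' hu => P.symm _ _ (hCF.1 A' (hA'.trans hAF) hu)⟩

end CoarseProximity

section Star

variable {X : Type u} {A C : Set X} {U V : Set (Set X)}

def starCover (U V : Set (Set X)) : Set (Set X) :=
  {W | ∃ A ∈ U, W = starOf A V}

lemma starOf_mono (h : A ⊆ C) : starOf A U ⊆ starOf C U := by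
  rintro x ⟨B, ⟨hBU, y, hyB, hyA⟩, hxB⟩
  exact ⟨B, ⟨hBU, y, hyB, h hyA⟩, hxB⟩

lemma subset_starOf (hU : ⋃₀ U = Set.univ) : A ⊆ starOf A U := by
  intro x hx
  obtain ⟨B, hBU, hxB⟩ := Set.mem_sUnion.1 (hU ▸ Set.mem_univ x)
  exact ⟨B, ⟨hBU, x, hxB, hx⟩, hxB⟩

lemma starOf_starCover_subset :
    starOf C (starCover U V) ⊆ starOf (starOf (starOf C V) U) V := by
  rintro x ⟨_, ⟨⟨A, hAU, rfl⟩, y, ⟨B, ⟨hBV, z, hzB, hzA⟩, hyB⟩, hyC⟩, hx⟩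
  have hA : A ⊆ starOf (starOf C V) U :=
    fun w hw => ⟨A, ⟨hAU, z, hzA, B, ⟨hBV, y, hyB, hyC⟩, hzB⟩, hw⟩
  exact starOf_mono hA hx

lemma sUnion_starCover (hU : ⋃₀ U = Set.univ) (hV : ⋃₀ V = Set.univ) :
    ⋃₀ starCover U V = Set.univ := by
  refine Set.eq_univ_of_forall fun x => ?_
  obtain ⟨A, hAU, hxA⟩ := Set.mem_sUnion.1 (hU ▸ Set.mem_univ x)
  exact ⟨starOf A V, ⟨A, hAU, rfl⟩, subset_starOf hV hxA⟩

variable {P : CoarseProximity X}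

lemma IsUnifBoundedCover.phi_starOf (hU : IsUnifBoundedCover P U) (A : Set X) :
    P.phi A (starOf A U) :=
  hU.1.2 _ _ ((subset_starOf hU.2).trans (starOf_mono (subset_starOf hU.2))) subset_rfl

lemma IsUnifBoundedCover.phi_starOf_starOf_starOf (hU : IsUnifBoundedCover P U)
    (hV : IsUnifBoundedCover P V) (A : Set X) :
    P.phi A (starOf (starOf (starOf A V) U) V) :=
  (hV.phi_starOf A).trans ((hU.phi_starOf _).trans (hV.phi_starOf _))

end Star

/-- If `U` and `V` are uniformly bounded covers of a coarse proximity space, then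
`st(U,V) = {st(A,V) : A ∈ U}` is a uniformly bounded cover. -/
theorem star_unifBoundedCover {X : Type u} (P : CoarseProximity X)
    (U V : Set (Set X)) (hU : IsUnifBoundedCover P U) (hV : IsUnifBoundedCover P V) :
    IsUnifBoundedCover P {W : Set X | ∃ A ∈ U, W = starOf A V} := by
  refine ⟨⟨?_, fun A C hA hC => ?_⟩, sUnion_starCover hU.2 hV.2⟩
  · rintro _ ⟨A, hAU, rfl⟩
    exact (hV.phi_starOf A).mem_bounded (hU.1.1 A hAU)
  · exact P.phi_of_subset_of_subset (hU.phi_starOf_starOf_starOf hV A)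
      (hC.trans starOf_starCover_subset) (hU.phi_starOf_starOf_starOf hV C)
      (hA.trans starOf_starCover_subset)
end

section
/- Let (X,B,b) be a coarse proximity space. Then the following are equivalent: (1) asdim(X) = 0, i.e. every uniformly bounded cover of X refines some uniformly bounded cover of X of order at most 1; (2) for every uniformly bounded cover V of X there is a uniformly bounded cover U of X whose V-multiplicity is at most 1; (3) for every uniformly bounded cover U of X, the collection of U-components of X is a uniformly bounded family. -/
universe u v w

/-- The `V`-multiplicity of `U` is at most 1: no member of `V` meets two distinct
members of `U`. -/
def VMultiplicityLEOne {X : Type u} (U V : Set (Set X)) : Prop :=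
  ∀ B ∈ V, ∀ A1 ∈ U, ∀ A2 ∈ U, (A1 ∩ B).Nonempty → (A2 ∩ B).Nonempty → A1 = A2

/-- One step of a `U`-chain: `x` and `y` lie in a common member of `U`. -/
def ChainStep {X : Type u} (U : Set (Set X)) (x y : X) : Prop :=
  ∃ B ∈ U, x ∈ B ∧ y ∈ B

/-- The collection of `U`-components of `X`. -/
def UComponents {X : Type u} (U : Set (Set X)) : Set (Set X) :=
  {C | ∃ x : X, C = {y : X | Relation.TransGen (ChainStep U) x y}}


/-!
A uniformly bounded cover of order at most one is a partition, so every member of a cover it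
refines meets only one of its parts. Covers of `V`-multiplicity at most one are unions of
`V`-chains, hence the `V`-components refine them; uniform boundedness passes to refinements
because refining only shrinks stars. Conversely the `U`-components are themselves a partition
refined by `U`, uniformly bounded by hypothesis.
-/

variable {X : Type u}

theorem starOf_subset_starOf_of_refines {A : Set X} {U V : Set (Set X)}
    (h : CoverRefines U V) : starOf A U ⊆ starOf A V := by
  rintro x ⟨B, ⟨hBU, y, hyB, hyA⟩, hxB⟩
  obtain ⟨C, hCV, hBC⟩ := h B hBU
  exact ⟨C, ⟨hCV, y, hBC hyB, hyA⟩, hBC hxB⟩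

theorem starOf_insert_empty (A : Set X) (U : Set (Set X)) :
    starOf A (insert ∅ U) = starOf A U := by
  refine congrArg Set.sUnion (Set.ext fun B => and_congr_left fun hB => or_iff_right ?_)
  rintro rfl
  simp at hB

theorem IsUnifBoundedFamily.of_refines {P : CoarseProximity X} {U V : Set (Set X)}
    (hV : IsUnifBoundedFamily P V) (h : CoverRefines U V) : IsUnifBoundedFamily P U := by
  refine ⟨fun B hB => ?_, fun A C hA hC => ?_⟩
  · obtain ⟨C, hCV, hBC⟩ := h B hB
    exact P.subset_mem C (hV.1 C hCV) B hBC
  · exact hV.2 A C (hA.trans (starOf_subset_starOf_of_refines h))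
      (hC.trans (starOf_subset_starOf_of_refines h))

theorem IsUnifBoundedFamily.insert_empty {P : CoarseProximity X} {U : Set (Set X)}
    (hU : IsUnifBoundedFamily P U) : IsUnifBoundedFamily P (insert ∅ U) := by
  refine ⟨?_, fun A C hA hC => ?_⟩
  · rintro B (rfl | hB)
    exacts [P.empty_mem, hU.1 B hB]
  · rw [starOf_insert_empty] at hA hC
    exact hU.2 A C hA hC

theorem coverOrderLE_one_iff {W : Set (Set X)} :
    CoverOrderLE W 1 ↔ ∀ x, ∀ A ∈ W, ∀ B ∈ W, x ∈ A → x ∈ B → A = B := by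
  classical
  constructor
  · intro h x A hA B hB hxA hxB
    by_contra hAB
    have hle := h x {A, B} (by simp [Set.insert_subset_iff, hA, hB]) (by simp [hxA, hxB])
    rw [Finset.card_pair hAB] at hle
    omega
  · intro h x s hs hx
    exact Finset.card_le_one.2 fun A hA B hB => h x A (hs hA) B (hs hB) (hx A hA) (hx B hB)

theorem VMultiplicityLEOne.of_refines {U V : Set (Set X)} (hU : CoverOrderLE U 1)
    (h : CoverRefines V U) : VMultiplicityLEOne U V := by
  rintro B hB A₁ hA₁ A₂ hA₂ ⟨x₁, hx₁A, hx₁B⟩ ⟨x₂, hx₂A, hx₂B⟩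
  obtain ⟨A, hA, hBA⟩ := h B hB
  have hOrder := coverOrderLE_one_iff.1 hU
  rw [hOrder x₁ A₁ hA₁ A hA hx₁A (hBA hx₁B), hOrder x₂ A₂ hA₂ A hA hx₂A (hBA hx₂B)]

section Components

variable {U : Set (Set X)}

def chainComponent (U : Set (Set X)) (x : X) : Set X :=
  {y | Relation.TransGen (ChainStep U) x y}

instance : Std.Symm (ChainStep U) where
  symm _ _ := fun ⟨B, hB, hx, hy⟩ => ⟨B, hB, hy, hx⟩

theorem chainComponent_mem_uComponents (x : X) : chainComponent U x ∈ UComponents U :=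
  ⟨x, rfl⟩

theorem subset_chainComponent {A : Set X} {a : X} (hA : A ∈ U) (ha : a ∈ A) :
    A ⊆ chainComponent U a :=
  fun _ hy => .single ⟨A, hA, ha, hy⟩

theorem chainComponent_eq_of_mem {x y : X} (h : y ∈ chainComponent U x) :
    chainComponent U y = chainComponent U x :=
  Set.ext fun _ => ⟨fun hz => Relation.TransGen.trans h hz,
    fun hz => Relation.TransGen.trans (symm h) hz⟩

theorem chainComponent_subset {A : Set X} {x : X}
    (hA : ∀ z y, z ∈ A → ChainStep U z y → y ∈ A) (hx : x ∈ A) :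
    chainComponent U x ⊆ A := by
  intro y hy
  induction hy with
  | single h => exact hA _ _ hx h
  | tail _ h ih => exact hA _ _ ih h

theorem coverOrderLE_one_insert_empty_uComponents (U : Set (Set X)) :
    CoverOrderLE (insert ∅ (UComponents U)) 1 := by
  refine coverOrderLE_one_iff.2 ?_
  rintro x A hA B hB hxA hxB
  obtain ⟨a, rfl⟩ := hA.resolve_left (Set.nonempty_of_mem hxA).ne_empty
  obtain ⟨b, rfl⟩ := hB.resolve_left (Set.nonempty_of_mem hxB).ne_empty
  exact (chainComponent_eq_of_mem (U := U) hxA).symm.trans (chainComponent_eq_of_mem hxB)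

theorem refines_insert_empty_uComponents (U : Set (Set X)) :
    CoverRefines U (insert ∅ (UComponents U)) := by
  intro A hA
  rcases A.eq_empty_or_nonempty with rfl | ⟨a, ha⟩
  · exact ⟨∅, Set.mem_insert _ _, subset_rfl⟩
  · exact ⟨_, Or.inr (chainComponent_mem_uComponents a), subset_chainComponent hA ha⟩

theorem sUnion_insert_empty_uComponents (hU : ⋃₀ U = Set.univ) :
    ⋃₀ insert ∅ (UComponents U) = Set.univ := by
  refine Set.eq_univ_of_forall fun x => ?_
  obtain ⟨A, hA, hxA⟩ := Set.mem_sUnion.1 (hU ▸ Set.mem_univ x)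
  exact ⟨_, Or.inr (chainComponent_mem_uComponents x), subset_chainComponent hA hxA hxA⟩

theorem VMultiplicityLEOne.uComponents_refines {V W : Set (Set X)} (hW : ⋃₀ W = Set.univ)
    (h : VMultiplicityLEOne W V) : CoverRefines (UComponents V) W := by
  have hcover : ∀ x, ∃ A ∈ W, x ∈ A := fun x => Set.mem_sUnion.1 (hW ▸ Set.mem_univ x)
  rintro _ ⟨x, rfl⟩
  obtain ⟨A, hA, hxA⟩ := hcover x
  refine ⟨A, hA, chainComponent_subset (fun z y hzA ⟨B, hB, hzB, hyB⟩ => ?_) hxA⟩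
  obtain ⟨A', hA', hyA'⟩ := hcover y
  rwa [h B hB A hA A' hA' ⟨z, hzA, hzB⟩ ⟨y, hyA', hyB⟩]

end Components

theorem exists_vMultiplicityLEOne_of_asdimLE_zero {P : CoarseProximity X} (h : AsdimLE P 0)
    {V : Set (Set X)} (hV : IsUnifBoundedCover P V) :
    ∃ U, IsUnifBoundedCover P U ∧ VMultiplicityLEOne U V := by
  obtain ⟨U, hU, hOrder, hRef⟩ := h V hV
  exact ⟨U, hU, .of_refines hOrder hRef⟩

theorem isUnifBoundedFamily_uComponents_of_multiplicity {P : CoarseProximity X}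
    (h : ∀ V : Set (Set X), IsUnifBoundedCover P V →
      ∃ U : Set (Set X), IsUnifBoundedCover P U ∧ VMultiplicityLEOne U V)
    {U : Set (Set X)} (hU : IsUnifBoundedCover P U) :
    IsUnifBoundedFamily P (UComponents U) := by
  obtain ⟨W, hW, hMult⟩ := h U hU
  exact hW.1.of_refines (hMult.uComponents_refines hW.2)

theorem asdimLE_zero_of_isUnifBoundedFamily_uComponents {P : CoarseProximity X}
    (h : ∀ U : Set (Set X), IsUnifBoundedCover P U → IsUnifBoundedFamily P (UComponents U)) :
    AsdimLE P 0 := fun U hU =>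
  -- `∅` is added so that an empty member of `U` is still refined when `X` is empty.
  ⟨insert ∅ (UComponents U), ⟨(h U hU).insert_empty, sUnion_insert_empty_uComponents hU.2⟩,
    coverOrderLE_one_insert_empty_uComponents U, refines_insert_empty_uComponents U⟩

/-- Characterization of asymptotic dimension zero for coarse proximity spaces:
`asdim(X) = 0` is equivalent both to the multiplicity condition and to the uniform
boundedness of the families of components. -/
theorem asdim_zero_characterization {X : Type u} (P : CoarseProximity X) :
    (AsdimLE P 0 ↔
      ∀ V : Set (Set X), IsUnifBoundedCover P V →
        ∃ U : Set (Set X), IsUnifBoundedCover P U ∧ VMultiplicityLEOne U V) ∧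
    (AsdimLE P 0 ↔
      ∀ U : Set (Set X), IsUnifBoundedCover P U → IsUnifBoundedFamily P (UComponents U)) := by
  have h12 := fun h V (hV : IsUnifBoundedCover P V) =>
    exists_vMultiplicityLEOne_of_asdimLE_zero h hV
  have h23 := fun h U (hU : IsUnifBoundedCover P U) =>
    isUnifBoundedFamily_uComponents_of_multiplicity h hU
  have h31 := @asdimLE_zero_of_isUnifBoundedFamily_uComponents X P
  exact ⟨⟨h12, fun h2 => h31 (h23 h2)⟩, ⟨fun h1 => h23 (h12 h1), h31⟩⟩
end

section
/- Let f : (X,B_X,b_X) → (Y,B_Y,b_Y) be an injective coarse proximity map such that for all A,C ⊆ X, A b_X C if and only if f(A) b_Y f(C) (an injective coarse proximity embedding). Let A,C ⊆ X satisfy A b_X C, and suppose U is a uniformly bounded cover of Y with st(f(A),U) ∩ f(C) unbounded. Then f⁻¹(U) := {f⁻¹(B) : B ∈ U} is a uniformly bounded cover of X and st(A,f⁻¹(U)) ∩ C is unbounded. -/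
universe u v w

/-- If `f` is an injective coarse proximity embedding, `A b_X C`, and a uniformly bounded
cover `U` of `Y` witnesses `f(A)` being close to `f(C)`, then `f⁻¹(U)` is a uniformly
bounded cover of `X` witnessing `A` being close to `C`. -/
theorem preimage_witnessing_cover {X : Type u} {Y : Type v}
    (P : CoarseProximity X) (Q : CoarseProximity Y) (f : X → Y)
    (hinj : Function.Injective f)
    (hmap : IsCoarseProxMap P Q f)
    (hemb : ∀ A C : Set X, P.close A C ↔ Q.close (f '' A) (f '' C))
    (A C : Set X) (hAC : P.close A C)
    (U : Set (Set Y)) (hU : IsUnifBoundedCover Q U)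
    (hwit : starOf (f '' A) U ∩ (f '' C) ∉ Q.bounded) :
    IsUnifBoundedCover P {B : Set X | ∃ D ∈ U, B = f ⁻¹' D} ∧
    starOf A {B : Set X | ∃ D ∈ U, B = f ⁻¹' D} ∩ C ∉ P.bounded := by
  set V : Set (Set X) := {B : Set X | ∃ D ∈ U, B = f ⁻¹' D} with hV
  -- boundedness transfer: image bounded → set bounded
  have hbdd : ∀ S : Set X, f '' S ∈ Q.bounded → S ∈ P.bounded := by
    intro S hS
    by_contra hSb
    have hclose : P.close S S := P.inter_close S S (by simpa [Set.inter_self] using hSb)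
    exact Q.unbounded_left _ _ ((hemb S S).1 hclose) hS
  -- star image inclusion
  have hstar : ∀ A' C' : Set X, A' ⊆ starOf C' V → f '' A' ⊆ starOf (f '' C') U := by
    intro A' C' h y hy
    obtain ⟨x, hxA, rfl⟩ := hy
    obtain ⟨B, ⟨⟨D, hDU, rfl⟩, z, hzB, hzC⟩, hxB⟩ := h hxA
    exact ⟨D, ⟨hDU, ⟨f z, hzB, ⟨z, hzC, rfl⟩⟩⟩, hxB⟩
  have hUB : IsUnifBoundedFamily P V := by
    constructor
    · rintro B ⟨D, hDU, rfl⟩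
      apply hbdd
      exact Q.subset_mem D (hU.1.1 D hDU) _ (Set.image_preimage_subset f D)
    · intro A' C' h1 h2
      have hQ : Q.phi (f '' A') (f '' C') :=
        hU.1.2 _ _ (hstar A' C' h1) (hstar C' A' h2)
      constructor
      · intro C'' hC'' hC''b
        have hcim : f '' C'' ∉ Q.bounded := fun h => hC''b (hbdd _ h)
        exact (hemb A' C'').2 (hQ.1 _ (Set.image_mono hC'') hcim)
      · intro A'' hA'' hA''b
        have haim : f '' A'' ∉ Q.bounded := fun h => hA''b (hbdd _ h)
        exact (hemb A'' C').2 (hQ.2 _ (Set.image_mono hA'') haim)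
  refine ⟨⟨hUB, ?_⟩, ?_⟩
  · apply Set.eq_univ_of_forall
    intro x
    have : f x ∈ ⋃₀ U := by rw [hU.2]; trivial
    obtain ⟨D, hDU, hfx⟩ := this
    exact ⟨f ⁻¹' D, ⟨D, hDU, rfl⟩, hfx⟩
  · intro hbad
    apply hwit
    have hsub : starOf (f '' A) U ∩ (f '' C) ⊆ f '' (starOf A V ∩ C) := by
      rintro y ⟨⟨D, ⟨hDU, z, hzD, x0, hx0A, hfx0⟩, hyD⟩, c, hcC, rfl⟩
      refine ⟨c, ⟨⟨f ⁻¹' D, ⟨⟨D, hDU, rfl⟩, x0, ?_, hx0A⟩, hyD⟩, hcC⟩, rfl⟩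
      show f x0 ∈ D
      rw [hfx0]; exact hzD
    exact Q.subset_mem _ (hmap.1 _ hbad) _ hsub
end
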